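/- arXiv:1703.05960 — 8 statements merged into one kernel-verified Lean document; each statement's English description precedes it below -/
import Mathlib

section
/- Let G be a simple graph and F a field. Then the isotropic 2-matroid Z₂(G) is representable over F if and only if Z₂(G) is strictly representable over F. -/
open Matrix

noncomputable section

/-- The rank over `F` of the set of columns of `M` indexed by `S`. -/
def colSpanRank (F : Type*) [Field F] {m n : Type*} (M : Matrix m n F) (S : Set n) : ℕ :=
  Module.finrank F ↥(Submodule.span F ((fun j i => M i j) '' S))

/-- A subtransversal of `W₂(G) = V × {φ,χ}`: at most one element of each pair. -/
def Subtransversal2 {V : Type*} (S : Set (V × Fin 2)) : Prop :=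
  ∀ v i j, (v, i) ∈ S → (v, j) ∈ S → i = j

/-- The matrix `IA(G) = (I | A)` over GF(2); the columns `(v,0)` and `(v,1)` are
`φ_G(v)` and `χ_G(v)` respectively. -/
def IAmat {V : Type*} [DecidableEq V] (A : Matrix V V (ZMod 2)) :
    Matrix V (V × Fin 2) (ZMod 2) :=
  Matrix.of fun v p => if p.2 = 0 then (if v = p.1 then 1 else 0) else A v p.1

/-- The isotropic 2-matroid `Z₂(G)` is representable over `F`. -/
def Z2Rep (F : Type*) [Field F] {V : Type*} [Fintype V] [DecidableEq V]
    (A : Matrix V V (ZMod 2)) : Prop :=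
  ∃ (k : ℕ) (P : Matrix (Fin k) (V × Fin 2) F),
    ∀ S : Set (V × Fin 2), Subtransversal2 S →
      colSpanRank F P S = colSpanRank (ZMod 2) (IAmat A) S

/-- `Z₂(G)` is strictly representable over `F`: the sheltering matroid has rank `|V(G)|`. -/
def Z2RepStrict (F : Type*) [Field F] {V : Type*} [Fintype V] [DecidableEq V]
    (A : Matrix V V (ZMod 2)) : Prop :=
  ∃ (k : ℕ) (P : Matrix (Fin k) (V × Fin 2) F),
    P.rank = Fintype.card V ∧
    ∀ S : Set (V × Fin 2), Subtransversal2 S →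
      colSpanRank F P S = colSpanRank (ZMod 2) (IAmat A) S

/-!
The φ-columns of `IA(G)` form a basis, so every sheltering matrix `P` has `|V|` independent
φ-columns. Since `G` has no loops, `χ_G(v)` lies in the span of the φ-columns other than
`φ_G(v)`; both sets are subtransversals, so the same rank equality holds for the columns of
`P`, which puts every χ-column of `P` into the span of its φ-columns. Hence `P` has rank `|V|`.
-/

namespace Matrix

variable {F : Type*} [Field F] {m n : Type*}

theorem colSpanRank_eq_finrank_span_col (M : Matrix m n F) (S : Set n) :
    colSpanRank F M S = Module.finrank F (Submodule.span F (M.col '' S)) :=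
  rfl

theorem colSpanRank_insert_eq_iff [Fintype m] (M : Matrix m n F) (S : Set n) (j : n) :
    colSpanRank F M (insert j S) = colSpanRank F M S ↔
      M.col j ∈ Submodule.span F (M.col '' S) := by
  rw [colSpanRank_eq_finrank_span_col, colSpanRank_eq_finrank_span_col, Set.image_insert_eq]
  constructor
  · intro h
    have hle := Submodule.span_mono (R := F) (Set.subset_insert (M.col j) (M.col '' S))
    rw [Submodule.eq_of_le_of_finrank_eq hle h.symm]
    exact Submodule.subset_span (Set.mem_insert _ _)
  · intro h
    rw [Submodule.span_insert_eq_span h]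

theorem rank_eq_colSpanRank_of_forall_col_mem_span [Fintype n] (M : Matrix m n F) (S : Set n)
    (h : ∀ j, M.col j ∈ Submodule.span F (M.col '' S)) :
    M.rank = colSpanRank F M S := by
  have hspan : Submodule.span F (Set.range M.col) = Submodule.span F (M.col '' S) :=
    le_antisymm (Submodule.span_le.2 (Set.range_subset_iff.2 h))
      (Submodule.span_mono (Set.image_subset_range _ _))
  rw [rank_eq_finrank_span_cols, colSpanRank_eq_finrank_span_col, hspan]

end Matrix

section IsotropicTwoMatroid

variable {V : Type*}

def phiSet (V : Type*) : Set (V × Fin 2) := {p | p.2 = 0}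

theorem Subtransversal2.mono {S T : Set (V × Fin 2)} (hT : Subtransversal2 T) (hST : S ⊆ T) :
    Subtransversal2 S :=
  fun v _ _ hi hj => hT v _ _ (hST hi) (hST hj)

theorem subtransversal2_phiSet : Subtransversal2 (phiSet V) :=
  fun _ _ _ hi hj => hi.trans hj.symm

theorem subtransversal2_insert_chi_phiSet_diff (v : V) :
    Subtransversal2 (insert (v, 1) (phiSet V \ {(v, 0)})) := by
  have key : ∀ p ∈ insert (v, 1) (phiSet V \ {(v, 0)}),
      (p.1 = v ∧ p.2 = 1) ∨ (p.1 ≠ v ∧ p.2 = 0) := by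
    rintro ⟨w, m⟩ (hm | ⟨hm0, hne⟩)
    · simp_all
    · exact Or.inr ⟨fun hw : w = v => hne (by simp [hw, show m = 0 from hm0]), hm0⟩
  intro w i j hi hj
  rcases key _ hi with ⟨hw, rfl⟩ | ⟨hw, rfl⟩ <;> rcases key _ hj with ⟨hw', rfl⟩ | ⟨hw', rfl⟩ <;>
    tauto

variable [DecidableEq V]

theorem col_IAmat_phi (A : Matrix V V (ZMod 2)) (w : V) :
    (IAmat A).col (w, 0) = Pi.single w 1 := by
  funext u
  simp [IAmat, Pi.single_apply]

theorem col_IAmat_chi (A : Matrix V V (ZMod 2)) (v : V) :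
    (IAmat A).col (v, 1) = A.col v := by
  funext u
  simp [IAmat]

variable [Fintype V]

theorem colSpanRank_IAmat_phiSet (A : Matrix V V (ZMod 2)) :
    colSpanRank (ZMod 2) (IAmat A) (phiSet V) = Fintype.card V := by
  have hspan : Submodule.span (ZMod 2) ((IAmat A).col '' phiSet V) = ⊤ := by
    refine eq_top_iff.2 ((Pi.basisFun (ZMod 2) V).span_eq.ge.trans (Submodule.span_mono ?_))
    rintro _ ⟨w, rfl⟩
    exact ⟨(w, 0), rfl, by rw [Pi.basisFun_apply, col_IAmat_phi]⟩
  rw [colSpanRank_eq_finrank_span_col, hspan, finrank_top, Module.finrank_fintype_fun_eq_card]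

theorem col_IAmat_chi_mem_span_phiSet_diff (A : Matrix V V (ZMod 2)) (hdiag : ∀ v, A v v = 0)
    (v : V) :
    (IAmat A).col (v, 1) ∈ Submodule.span (ZMod 2) ((IAmat A).col '' (phiSet V \ {(v, 0)})) := by
  rw [col_IAmat_chi, pi_eq_sum_univ' (A.col v)]
  refine Submodule.sum_mem _ fun w _ => ?_
  by_cases hw : w = v
  · subst hw
    simp [hdiag]
  · refine Submodule.smul_mem _ _ (Submodule.subset_span ⟨(w, 0), ⟨rfl, by simp [hw]⟩, ?_⟩)
    rw [col_IAmat_phi]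

def Shelters {F : Type*} [Field F] {k : Type*} (P : Matrix k (V × Fin 2) F)
    (A : Matrix V V (ZMod 2)) : Prop :=
  ∀ S : Set (V × Fin 2), Subtransversal2 S →
    colSpanRank F P S = colSpanRank (ZMod 2) (IAmat A) S

theorem Shelters.col_chi_mem_span_phiSet {F : Type*} [Field F] {k : Type*} [Fintype k]
    {P : Matrix k (V × Fin 2) F} {A : Matrix V V (ZMod 2)} (hP : Shelters P A)
    (hdiag : ∀ v, A v v = 0) (v : V) :
    P.col (v, 1) ∈ Submodule.span F (P.col '' phiSet V) := by
  have hrank : colSpanRank F P (insert (v, 1) (phiSet V \ {(v, 0)})) =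
      colSpanRank F P (phiSet V \ {(v, 0)}) := by
    rw [hP _ (subtransversal2_insert_chi_phiSet_diff v),
      hP _ (subtransversal2_phiSet.mono Set.sdiff_subset),
      colSpanRank_insert_eq_iff]
    exact col_IAmat_chi_mem_span_phiSet_diff A hdiag v
  exact Submodule.span_mono (Set.image_mono Set.sdiff_subset)
    ((colSpanRank_insert_eq_iff _ _ _).1 hrank)

theorem Shelters.rank_eq_card {F : Type*} [Field F] {k : Type*} [Fintype k]
    {P : Matrix k (V × Fin 2) F} {A : Matrix V V (ZMod 2)} (hP : Shelters P A)
    (hdiag : ∀ v, A v v = 0) :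
    P.rank = Fintype.card V := by
  rw [P.rank_eq_colSpanRank_of_forall_col_mem_span (phiSet V), hP _ subtransversal2_phiSet,
    colSpanRank_IAmat_phiSet]
  rintro ⟨v, m⟩
  fin_cases m
  · exact Submodule.subset_span ⟨(v, 0), rfl, rfl⟩
  · exact hP.col_chi_mem_span_phiSet hdiag v

end IsotropicTwoMatroid

theorem Z2_representable_iff_strictly_general
    {V : Type} [Fintype V] [DecidableEq V] (A : Matrix V V (ZMod 2))
    (hdiag : ∀ v, A v v = 0) (F : Type) [Field F] :
    Z2Rep F A ↔ Z2RepStrict F A := by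
  constructor
  · rintro ⟨k, P, hP⟩
    exact ⟨k, P, Shelters.rank_eq_card hP hdiag, hP⟩
  · rintro ⟨k, P, -, hP⟩
    exact ⟨k, P, hP⟩

/-- For a simple graph `G`, `Z₂(G)` is representable over `F` if and only if it is
strictly representable over `F`. -/
theorem Z2_representable_iff_strictly
    {V : Type} [Fintype V] [DecidableEq V] (A : Matrix V V (ZMod 2))
    (hsym : A.IsSymm) (hdiag : ∀ v, A v v = 0) (F : Type) [Field F] :
    Z2Rep F A ↔ Z2RepStrict F A :=
  Z2_representable_iff_strictly_general A hdiag F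
end
end

section
/- Let G and H be looped simple graphs that are locally equivalent (up to isomorphism) and let F be a field. Then Z₃(G) is representable (respectively, strictly representable) over F if and only if Z₃(H) is representable (respectively, strictly representable) over F. -/
open Matrix

noncomputable section

/-- A subtransversal of `W(G) = V × {φ,χ,ψ}`: at most one element of each triple. -/
def Subtransversal3 {V : Type*} (S : Set (V × Fin 3)) : Prop :=
  ∀ v i j, (v, i) ∈ S → (v, j) ∈ S → i = j

/-- The matrix `IAS(G) = (I | A | I + A)` over GF(2); the columns `(v,0)`, `(v,1)`,
`(v,2)` are `φ_G(v)`, `χ_G(v)`, `ψ_G(v)` respectively. -/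
def IASmat {V : Type*} [DecidableEq V] (A : Matrix V V (ZMod 2)) :
    Matrix V (V × Fin 3) (ZMod 2) :=
  Matrix.of fun v p =>
    if p.2 = 0 then (if v = p.1 then 1 else 0)
    else if p.2 = 1 then A v p.1
    else (if v = p.1 then 1 else 0) + A v p.1

/-- The isotropic 3-matroid `Z₃(G)` is representable over `F`: some matrix over `F`
with columns indexed by `W(G)` has the same rank as `IAS(G)` on every subtransversal. -/
def Z3Rep (F : Type*) [Field F] {V : Type*} [Fintype V] [DecidableEq V]
    (A : Matrix V V (ZMod 2)) : Prop :=
  ∃ (k : ℕ) (P : Matrix (Fin k) (V × Fin 3) F),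
    ∀ S : Set (V × Fin 3), Subtransversal3 S →
      colSpanRank F P S = colSpanRank (ZMod 2) (IASmat A) S

/-- `Z₃(G)` is strictly representable over `F`: the sheltering matroid has rank `|V(G)|`. -/
def Z3RepStrict (F : Type*) [Field F] {V : Type*} [Fintype V] [DecidableEq V]
    (A : Matrix V V (ZMod 2)) : Prop :=
  ∃ (k : ℕ) (P : Matrix (Fin k) (V × Fin 3) F),
    P.rank = Fintype.card V ∧
    ∀ S : Set (V × Fin 3), Subtransversal3 S →
      colSpanRank F P S = colSpanRank (ZMod 2) (IASmat A) S

/-- Complement the loop status of `v`. -/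
def loopComp {V : Type*} [DecidableEq V] (A : Matrix V V (ZMod 2)) (v : V) :
    Matrix V V (ZMod 2) :=
  Matrix.of fun i j => if i = v ∧ j = v then A i j + 1 else A i j

/-- Simple local complement at `v`: complement the adjacency status of every pair of
distinct neighbors of `v`. -/
def simpleLC {V : Type*} [DecidableEq V] (A : Matrix V V (ZMod 2)) (v : V) :
    Matrix V V (ZMod 2) :=
  Matrix.of fun i j =>
    if i ≠ j ∧ i ≠ v ∧ j ≠ v ∧ A i v = 1 ∧ A j v = 1 then A i j + 1 else A i j

/-- Non-simple local complement at `v`: additionally complement the loop status of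
every neighbor of `v`. -/
def nonsimpleLC {V : Type*} [DecidableEq V] (A : Matrix V V (ZMod 2)) (v : V) :
    Matrix V V (ZMod 2) :=
  Matrix.of fun i j =>
    if i ≠ v ∧ j ≠ v ∧ A i v = 1 ∧ A j v = 1 then A i j + 1 else A i j

/-- One elementary step of local equivalence. -/
def LocStep {V : Type*} [DecidableEq V] (A B : Matrix V V (ZMod 2)) : Prop :=
  ∃ v, B = loopComp A v ∨ B = simpleLC A v ∨ B = nonsimpleLC A v

/-- Local equivalence: the equivalence relation generated by loop complementations
and (simple and non-simple) local complementations. -/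
def LocEquiv {V : Type*} [DecidableEq V] :
    Matrix V V (ZMod 2) → Matrix V V (ZMod 2) → Prop :=
  Relation.EqvGen LocStep


section Z3Aux

variable {F : Type*} [Field F]

lemma colSpanRank_submatrix_id {m n n' : Type*} (M : Matrix m n F) (f : n' → n) (S : Set n') :
    colSpanRank F (M.submatrix id f) S = colSpanRank F M (f '' S) := by
  unfold colSpanRank
  rw [Set.image_image]
  rfl

lemma colSpanRank_equivimg {m m' n : Type*} (M : Matrix m n F) (e : (m → F) ≃ₗ[F] (m' → F))
    (M' : Matrix m' n F) (h : ∀ j : n, (fun i => M' i j) = e (fun i => M i j)) (S : Set n) :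
    colSpanRank F M' S = colSpanRank F M S := by
  unfold colSpanRank
  have h1 : ((fun j i => M' i j) '' S) = ⇑e '' ((fun j i => M i j) '' S) := by
    rw [Set.image_image]
    exact Set.image_congr fun j _ => h j
  rw [h1, ← LinearEquiv.coe_coe, Submodule.span_image]
  exact LinearEquiv.finrank_map_eq _ _

lemma colSpanRank_rowequiv {m m' n : Type*} (M : Matrix m n F) (g : m' ≃ m) (S : Set n) :
    colSpanRank F (M.submatrix ⇑g id) S = colSpanRank F M S :=
  colSpanRank_equivimg M (LinearEquiv.funCongrLeft F F g) _ (fun _ => rfl) S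

lemma colSpanRank_invmul {n V : Type*} [Fintype V] [DecidableEq V]
    (N : Matrix V V F) (M : Matrix V n F) (hN : N * N = 1) (S : Set n) :
    colSpanRank F (N * M) S = colSpanRank F M S := by
  refine colSpanRank_equivimg M (LinearEquiv.ofLinear N.mulVecLin N.mulVecLin ?_ ?_) _
    (fun j => ?_) S
  · rw [← Matrix.mulVecLin_mul, hN, Matrix.mulVecLin_one]
  · rw [← Matrix.mulVecLin_mul, hN, Matrix.mulVecLin_one]
  · ext i
    simp [Matrix.mul_apply, Matrix.mulVecLin, Matrix.mulVec, dotProduct]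

variable {V : Type*} [Fintype V] [DecidableEq V]

/-- Column equivalence of `IAS` matrices: invertible row transform + per-vertex
permutations of the triples. -/
def ColEquiv (A B : Matrix V V (ZMod 2)) : Prop :=
  ∃ (N : Matrix V V (ZMod 2)) (σ : V → Equiv.Perm (Fin 3)),
    N * N = 1 ∧
    IASmat B = (N * IASmat A).submatrix id (fun p => (p.1, σ p.1 p.2))

omit [DecidableEq V] in
lemma mul_submatrix_cols {n n' : Type*} (X : Matrix V V (ZMod 2)) (M : Matrix V n (ZMod 2))
    (f : n' → n) : (X * M).submatrix id f = X * (M.submatrix id f) := by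
  ext i j
  simp [Matrix.mul_apply]

lemma ColEquiv.symm {A B : Matrix V V (ZMod 2)} (h : ColEquiv A B) : ColEquiv B A := by
  obtain ⟨N, σ, hN, hI⟩ := h
  refine ⟨N, fun u => (σ u)⁻¹, hN, ?_⟩
  have h2 : N * IASmat B = (IASmat A).submatrix id (fun p => (p.1, σ p.1 p.2)) := by
    rw [hI, mul_submatrix_cols, ← Matrix.mul_assoc, hN, Matrix.one_mul]
  rw [h2, Matrix.submatrix_submatrix]
  have : ((fun p : V × Fin 3 => (p.1, σ p.1 p.2)) ∘ fun p : V × Fin 3 => (p.1, (σ p.1)⁻¹ p.2))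
      = id := by
    funext p
    simp
  rw [this]
  rfl

omit [Fintype V] [DecidableEq V] in
lemma subtransversal_image (σ : V → Equiv.Perm (Fin 3)) {S : Set (V × Fin 3)}
    (hS : Subtransversal3 S) :
    Subtransversal3 ((fun p : V × Fin 3 => (p.1, σ p.1 p.2)) '' S) := by
  rintro v i j ⟨⟨u1, a⟩, ha, h1⟩ ⟨⟨u2, b⟩, hb, h2⟩
  simp only [Prod.mk.injEq] at h1 h2
  obtain ⟨rfl, rfl⟩ := h1
  obtain ⟨rfl, rfl⟩ := h2
  exact congrArg _ (hS _ a b ha hb)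

end Z3Aux
section Transfer
variable {F : Type*} [Field F] {V : Type*} [Fintype V] [DecidableEq V]

lemma ColEquiv.z3rep_mp {A B : Matrix V V (ZMod 2)} (h : ColEquiv A B)
    (hA : Z3Rep F A) : Z3Rep F B := by
  obtain ⟨N, σ, hN, hI⟩ := h
  obtain ⟨k, P, hP⟩ := hA
  set g : V × Fin 3 → V × Fin 3 := fun p => (p.1, σ p.1 p.2) with hg
  refine ⟨k, P.submatrix id g, fun S hS => ?_⟩
  calc colSpanRank F (P.submatrix id g) S = colSpanRank F P (g '' S) :=
        colSpanRank_submatrix_id P g S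
    _ = colSpanRank (ZMod 2) (IASmat A) (g '' S) := hP _ (subtransversal_image σ hS)
    _ = colSpanRank (ZMod 2) (N * IASmat A) (g '' S) := (colSpanRank_invmul N _ hN _).symm
    _ = colSpanRank (ZMod 2) ((N * IASmat A).submatrix id g) S :=
        (colSpanRank_submatrix_id _ g S).symm
    _ = colSpanRank (ZMod 2) (IASmat B) S := by rw [hI]

lemma rank_submatrix_cols_equiv {k : ℕ} (P : Matrix (Fin k) (V × Fin 3) F)
    (σ : V → Equiv.Perm (Fin 3)) :
    (P.submatrix id (fun p : V × Fin 3 => (p.1, σ p.1 p.2))).rank = P.rank := by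
  have h1 : P.submatrix id (fun p : V × Fin 3 => (p.1, σ p.1 p.2))
      = P.submatrix id ⇑(Equiv.prodCongrRight σ) := by
    ext i ⟨u, a⟩; rfl
  rw [h1, Matrix.rank, Matrix.rank, Matrix.mulVecLin_submatrix,
    show LinearMap.funLeft F F (id : Fin k → Fin k) = LinearMap.id from rfl,
    LinearMap.id_comp, LinearMap.range_comp,
    show LinearMap.funLeft F F ⇑(Equiv.prodCongrRight σ).symm
      = (LinearEquiv.funCongrLeft F F (Equiv.prodCongrRight σ).symm : (V × Fin 3 → F) →ₗ[F] _)
      from rfl,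
    LinearEquiv.range, Submodule.map_top]

lemma ColEquiv.z3repStrict_mp {A B : Matrix V V (ZMod 2)} (h : ColEquiv A B)
    (hA : Z3RepStrict F A) : Z3RepStrict F B := by
  obtain ⟨N, σ, hN, hI⟩ := h
  obtain ⟨k, P, hPr, hP⟩ := hA
  set g : V × Fin 3 → V × Fin 3 := fun p => (p.1, σ p.1 p.2) with hg
  refine ⟨k, P.submatrix id g, ?_, fun S hS => ?_⟩
  · rw [rank_submatrix_cols_equiv P σ]; exact hPr
  calc colSpanRank F (P.submatrix id g) S = colSpanRank F P (g '' S) :=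
        colSpanRank_submatrix_id P g S
    _ = colSpanRank (ZMod 2) (IASmat A) (g '' S) := hP _ (subtransversal_image σ hS)
    _ = colSpanRank (ZMod 2) (N * IASmat A) (g '' S) := (colSpanRank_invmul N _ hN _).symm
    _ = colSpanRank (ZMod 2) ((N * IASmat A).submatrix id g) S :=
        (colSpanRank_submatrix_id _ g S).symm
    _ = colSpanRank (ZMod 2) (IASmat B) S := by rw [hI]

lemma ColEquiv.z3_iff {A B : Matrix V V (ZMod 2)} (h : ColEquiv A B) :
    (Z3Rep F A ↔ Z3Rep F B) ∧ (Z3RepStrict F A ↔ Z3RepStrict F B) :=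
  ⟨⟨h.z3rep_mp, h.symm.z3rep_mp⟩, ⟨h.z3repStrict_mp, h.symm.z3repStrict_mp⟩⟩

end Transfer
section Moves
variable {V : Type*} [Fintype V] [DecidableEq V]

lemma colEquiv_loopComp (A : Matrix V V (ZMod 2)) (v : V) : ColEquiv A (loopComp A v) := by
  refine ⟨1, fun u => if u = v then Equiv.swap 1 2 else 1, by rw [one_mul], ?_⟩
  rw [Matrix.one_mul]
  ext w ⟨u, i⟩
  rw [Matrix.submatrix_apply]
  by_cases huv : u = v
  · subst huv
    simp only [if_pos rfl]
    fin_cases i <;>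
      simp (config := { decide := true }) [IASmat, loopComp, Equiv.swap_apply_def] <;>
      split_ifs <;>
      (try ring) <;>
      (generalize A w u = a; revert a; decide)
  · simp only [if_neg huv]
    fin_cases i <;>
      simp (config := { decide := true }) [IASmat, loopComp, huv] <;>
      split_ifs <;>
      (try ring) <;>
      (generalize A w u = a; revert a; decide)

end Moves
section LC
variable {V : Type*} [Fintype V] [DecidableEq V]

lemma zmod2_cases : ∀ a : ZMod 2, a = 0 ∨ a = 1 := by decide

/-- The row transformation for local complementation at `v`. -/
def lcN (A : Matrix V V (ZMod 2)) (v : V) : Matrix V V (ZMod 2) :=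
  Matrix.of fun i j =>
    (if i = j then 1 else 0) + (if j = v then (if i = v then 0 else A i v) else 0)

lemma lcN_mul_apply (A : Matrix V V (ZMod 2)) (v : V) {n : Type*} (M : Matrix V n (ZMod 2))
    (w : V) (p : n) :
    (lcN A v * M) w p = M w p + (if w = v then 0 else A w v) * M v p := by
  rw [Matrix.mul_apply]
  have h : ∀ k, lcN A v w k * M k p
      = (if w = k then M k p else 0)
        + (if k = v then (if w = v then 0 else A w v) * M v p else 0) := by
    intro k
    by_cases hkv : k = v <;> by_cases hwk : w = k <;>
      simp [lcN, hkv, hwk, add_mul, ite_mul]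
  rw [Finset.sum_congr rfl fun k _ => h k, Finset.sum_add_distrib,
    Finset.sum_ite_eq, Finset.sum_ite_eq']
  simp

lemma lcN_mul_self (A : Matrix V V (ZMod 2)) (v : V) : lcN A v * lcN A v = 1 := by
  ext i j
  rw [lcN_mul_apply]
  by_cases hjv : j = v <;> by_cases hiv : i = v <;> by_cases hij : i = j <;>
    simp (config := { decide := true }) [lcN, hjv, hiv, hij, Matrix.one_apply] <;>
    (try (generalize A i v = a; revert a; decide)) <;>
    (intro h; exact absurd h.symm hjv)

end LC
section LC2
variable {V : Type*} [Fintype V] [DecidableEq V]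

set_option maxHeartbeats 2000000 in
lemma colEquiv_nonsimpleLC (A : Matrix V V (ZMod 2)) (hA : A.IsSymm) (v : V) :
    ColEquiv A (nonsimpleLC A v) := by
  refine ⟨lcN A v, fun u => if u = v then
      (if A v v = 0 then Equiv.swap 0 2 else Equiv.swap 0 1) else 1,
    lcN_mul_self A v, ?_⟩
  ext w ⟨u, i⟩
  rw [Matrix.submatrix_apply, lcN_mul_apply]
  have hs1 : A u w = A w u := hA.apply w u
  have hs2 : A v w = A w v := hA.apply w v
  have hs3 : A v u = A u v := hA.apply u v
  rcases zmod2_cases (A v v) with hd | hd <;>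
  rcases zmod2_cases (A u v) with hc | hc <;>
  by_cases huv : u = v <;> by_cases hwv : w = v <;> by_cases hwu : w = u <;>
    fin_cases i <;>
    simp (config := { decide := true })
      [IASmat, nonsimpleLC, Equiv.swap_apply_def, hs1, hs2, hs3, hd, hc,
       huv, hwv, hwu, (eq_comm (a := v) (b := u)), (eq_comm (a := v) (b := w)),
       (eq_comm (a := u) (b := w))] <;>
    (try (exact absurd (hwv.trans huv.symm) hwu)) <;>
    (try ring) <;>
    (try (ring_nf; rw [show (2 : ZMod 2) = 0 by decide]; try rw [show (3 : ZMod 2) = 1 by decide]; ring)) <;>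
    (generalize A w u = a; generalize A w v = b; generalize A u v = c;
     generalize A v v = d; generalize A w w = e; generalize A u u = f;
     revert a b c d e f;
     first
     | decide
     | (intros; ring)
     | (intros; rw [show (2 : ZMod 2) = 0 by decide]; ring))

set_option maxHeartbeats 2000000 in
lemma colEquiv_simpleLC (A : Matrix V V (ZMod 2)) (hA : A.IsSymm) (v : V) :
    ColEquiv A (simpleLC A v) := by
  refine ⟨lcN A v, fun u => if u = v then
      (if A v v = 0 then Equiv.swap 0 2 else Equiv.swap 0 1)
      else (if A u v = 1 then Equiv.swap 1 2 else 1),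
    lcN_mul_self A v, ?_⟩
  ext w ⟨u, i⟩
  rw [Matrix.submatrix_apply, lcN_mul_apply]
  have hs1 : A u w = A w u := hA.apply w u
  have hs2 : A v w = A w v := hA.apply w v
  have hs3 : A v u = A u v := hA.apply u v
  rcases zmod2_cases (A v v) with hd | hd <;>
  rcases zmod2_cases (A u v) with hc | hc <;>
  by_cases huv : u = v <;> by_cases hwv : w = v <;> by_cases hwu : w = u <;>
    fin_cases i <;>
    simp (config := { decide := true })
      [IASmat, simpleLC, Equiv.swap_apply_def, hs1, hs2, hs3, hd, hc,
       huv, hwv, hwu, (eq_comm (a := v) (b := u)), (eq_comm (a := v) (b := w)),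
       (eq_comm (a := u) (b := w))] <;>
    (try (exact absurd (hwv.trans huv.symm) hwu)) <;>
    (try ring) <;>
    (try (ring_nf; rw [show (2 : ZMod 2) = 0 by decide]; try rw [show (3 : ZMod 2) = 1 by decide]; ring)) <;>
    (generalize A w u = a; generalize A w v = b; generalize A u v = c;
     generalize A v v = d; generalize A w w = e; generalize A u u = f;
     revert a b c d e f;
     first
     | decide
     | (intros; ring)
     | (intros; rw [show (2 : ZMod 2) = 0 by decide]; ring))

end LC2
section Symm
variable {V : Type*} [Fintype V] [DecidableEq V]

omit [Fintype V] in
lemma loopComp_isSymm {A : Matrix V V (ZMod 2)} (hA : A.IsSymm) (v : V) :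
    (loopComp A v).IsSymm := by
  apply Matrix.IsSymm.ext
  intro i j
  simp only [loopComp, Matrix.of_apply, hA.apply i j, and_comm]

omit [Fintype V] in
lemma simpleLC_isSymm {A : Matrix V V (ZMod 2)} (hA : A.IsSymm) (v : V) :
    (simpleLC A v).IsSymm := by
  apply Matrix.IsSymm.ext
  intro i j
  simp only [simpleLC, Matrix.of_apply, hA.apply i j]
  have : (j ≠ i ∧ j ≠ v ∧ i ≠ v ∧ A j v = 1 ∧ A i v = 1)
      ↔ (i ≠ j ∧ i ≠ v ∧ j ≠ v ∧ A i v = 1 ∧ A j v = 1) := by tauto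
  rw [if_congr this rfl rfl]

omit [Fintype V] in
lemma nonsimpleLC_isSymm {A : Matrix V V (ZMod 2)} (hA : A.IsSymm) (v : V) :
    (nonsimpleLC A v).IsSymm := by
  apply Matrix.IsSymm.ext
  intro i j
  simp only [nonsimpleLC, Matrix.of_apply, hA.apply i j]
  have : (j ≠ v ∧ i ≠ v ∧ A j v = 1 ∧ A i v = 1)
      ↔ (i ≠ v ∧ j ≠ v ∧ A i v = 1 ∧ A j v = 1) := by tauto
  rw [if_congr this rfl rfl]

omit [Fintype V] in
lemma loopComp_invol (A : Matrix V V (ZMod 2)) (v : V) : loopComp (loopComp A v) v = A := by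
  ext i j
  simp only [loopComp, Matrix.of_apply]
  split_ifs <;>
    first
    | rfl
    | (generalize A i j = a; revert a; decide)

omit [Fintype V] in
lemma simpleLC_invol (A : Matrix V V (ZMod 2)) (v : V) : simpleLC (simpleLC A v) v = A := by
  ext i j
  have h1 : simpleLC A v i v = A i v := by simp [simpleLC]
  have h2 : simpleLC A v j v = A j v := by simp [simpleLC]
  show (if i ≠ j ∧ i ≠ v ∧ j ≠ v ∧ simpleLC A v i v = 1 ∧ simpleLC A v j v = 1
    then simpleLC A v i j + 1 else simpleLC A v i j) = A i j
  rw [h1, h2]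
  by_cases hc : i ≠ j ∧ i ≠ v ∧ j ≠ v ∧ A i v = 1 ∧ A j v = 1
  · rw [if_pos hc]
    simp only [simpleLC, Matrix.of_apply]
    rw [if_pos hc]
    generalize A i j = a; revert a; decide
  · rw [if_neg hc]
    simp only [simpleLC, Matrix.of_apply]
    rw [if_neg hc]

omit [Fintype V] in
lemma nonsimpleLC_invol (A : Matrix V V (ZMod 2)) (v : V) :
    nonsimpleLC (nonsimpleLC A v) v = A := by
  ext i j
  have h1 : nonsimpleLC A v i v = A i v := by simp [nonsimpleLC]
  have h2 : nonsimpleLC A v j v = A j v := by simp [nonsimpleLC]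
  show (if i ≠ v ∧ j ≠ v ∧ nonsimpleLC A v i v = 1 ∧ nonsimpleLC A v j v = 1
    then nonsimpleLC A v i j + 1 else nonsimpleLC A v i j) = A i j
  rw [h1, h2]
  by_cases hc : i ≠ v ∧ j ≠ v ∧ A i v = 1 ∧ A j v = 1
  · rw [if_pos hc]
    simp only [nonsimpleLC, Matrix.of_apply]
    rw [if_pos hc]
    generalize A i j = a; revert a; decide
  · rw [if_neg hc]
    simp only [nonsimpleLC, Matrix.of_apply]
    rw [if_neg hc]

end Symm
section Assemble
variable (F : Type*) [Field F] {V : Type*} [Fintype V] [DecidableEq V]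

/-- The invariant relation used for the induction along local equivalence. -/
def GoodRel (C D : Matrix V V (ZMod 2)) : Prop :=
  (C.IsSymm ↔ D.IsSymm) ∧
  (C.IsSymm → ((Z3Rep F C ↔ Z3Rep F D) ∧ (Z3RepStrict F C ↔ Z3RepStrict F D)))

lemma locStep_goodRel {C D : Matrix V V (ZMod 2)} (h : LocStep C D) : GoodRel F C D := by
  obtain ⟨v, hv⟩ := h
  rcases hv with rfl | rfl | rfl
  · exact ⟨⟨fun hs => loopComp_isSymm hs v,
      fun hs => by rw [← loopComp_invol C v]; exact loopComp_isSymm hs v⟩,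
      fun hs => (colEquiv_loopComp C v).z3_iff⟩
  · exact ⟨⟨fun hs => simpleLC_isSymm hs v,
      fun hs => by rw [← simpleLC_invol C v]; exact simpleLC_isSymm hs v⟩,
      fun hs => (colEquiv_simpleLC C hs v).z3_iff⟩
  · exact ⟨⟨fun hs => nonsimpleLC_isSymm hs v,
      fun hs => by rw [← nonsimpleLC_invol C v]; exact nonsimpleLC_isSymm hs v⟩,
      fun hs => (colEquiv_nonsimpleLC C hs v).z3_iff⟩

lemma locEquiv_goodRel {C D : Matrix V V (ZMod 2)} (h : LocEquiv C D) : GoodRel F C D := by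
  induction h with
  | rel x y hxy => exact locStep_goodRel F hxy
  | refl x => exact ⟨Iff.rfl, fun _ => ⟨Iff.rfl, Iff.rfl⟩⟩
  | symm x y hxy ih =>
      refine ⟨ih.1.symm, fun hy => ?_⟩
      obtain ⟨i1, i2⟩ := ih.2 (ih.1.symm.mp hy)
      exact ⟨i1.symm, i2.symm⟩
  | trans x y z h1 h2 ih1 ih2 =>
      refine ⟨ih1.1.trans ih2.1, fun hx => ?_⟩
      obtain ⟨i1, i2⟩ := ih1.2 hx
      obtain ⟨j1, j2⟩ := ih2.2 (ih1.1.mp hx)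
      exact ⟨i1.trans j1, i2.trans j2⟩

end Assemble

section Relabel
variable (F : Type*) [Field F] {V V' : Type*} [Fintype V] [DecidableEq V]
  [Fintype V'] [DecidableEq V']

lemma rank_submatrix_cols {F : Type*} [Field F] {k : ℕ} {n n' : Type*} [Fintype n] [Fintype n']
    (P : Matrix (Fin k) n F) (τ : n' ≃ n) :
    (P.submatrix id ⇑τ).rank = P.rank := by
  rw [Matrix.rank, Matrix.rank, Matrix.mulVecLin_submatrix,
    show LinearMap.funLeft F F (id : Fin k → Fin k) = LinearMap.id from rfl,
    LinearMap.id_comp, LinearMap.range_comp,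
    show LinearMap.funLeft F F ⇑τ.symm
      = ((LinearEquiv.funCongrLeft F F τ.symm : (n' → F) ≃ₗ[F] (n → F)) :
          (n' → F) →ₗ[F] (n → F)) from rfl,
    LinearEquiv.range, Submodule.map_top]

lemma IASmat_reindex (e : V ≃ V') (A : Matrix V V (ZMod 2)) :
    IASmat (Matrix.of fun u u' => A (e.symm u) (e.symm u'))
      = ((IASmat A).submatrix (⇑e.symm) id).submatrix id
          (fun p : V' × Fin 3 => (e.symm p.1, p.2)) := by
  ext w ⟨u, i⟩
  fin_cases i <;>
    simp (config := { decide := true }) [IASmat, EmbeddingLike.apply_eq_iff_eq]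

lemma subtrans_image_reindex (e : V ≃ V') {S : Set (V' × Fin 3)} (hS : Subtransversal3 S) :
    Subtransversal3 ((fun p : V' × Fin 3 => (e.symm p.1, p.2)) '' S) := by
  rintro v i j ⟨⟨u1, a⟩, ha, h1⟩ ⟨⟨u2, b⟩, hb, h2⟩
  simp only [Prod.mk.injEq] at h1 h2
  obtain ⟨he1, rfl⟩ := h1
  obtain ⟨he2, rfl⟩ := h2
  have : u1 = u2 := e.symm.injective (he1.trans he2.symm)
  subst this
  exact hS _ _ _ ha hb

lemma z3rep_reindex_mp (e : V ≃ V') (A : Matrix V V (ZMod 2)) (h : Z3Rep F A) :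
    Z3Rep F (Matrix.of fun u u' => A (e.symm u) (e.symm u')) := by
  obtain ⟨k, P, hP⟩ := h
  set g : V' × Fin 3 → V × Fin 3 := fun p => (e.symm p.1, p.2) with hg
  refine ⟨k, P.submatrix id g, fun S hS => ?_⟩
  calc colSpanRank F (P.submatrix id g) S = colSpanRank F P (g '' S) :=
        colSpanRank_submatrix_id P g S
    _ = colSpanRank (ZMod 2) (IASmat A) (g '' S) := hP _ (subtrans_image_reindex e hS)
    _ = colSpanRank (ZMod 2) ((IASmat A).submatrix (⇑e.symm) id) (g '' S) :=
        (colSpanRank_rowequiv _ e.symm _).symm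
    _ = colSpanRank (ZMod 2) (((IASmat A).submatrix (⇑e.symm) id).submatrix id g) S :=
        (colSpanRank_submatrix_id _ g S).symm
    _ = colSpanRank (ZMod 2) (IASmat (Matrix.of fun u u' => A (e.symm u) (e.symm u'))) S := by
        rw [IASmat_reindex]

lemma z3repStrict_reindex_mp (e : V ≃ V') (A : Matrix V V (ZMod 2)) (h : Z3RepStrict F A) :
    Z3RepStrict F (Matrix.of fun u u' => A (e.symm u) (e.symm u')) := by
  obtain ⟨k, P, hPr, hP⟩ := h
  set g : V' × Fin 3 → V × Fin 3 := fun p => (e.symm p.1, p.2) with hg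
  refine ⟨k, P.submatrix id g, ?_, fun S hS => ?_⟩
  · have hge : g = ⇑(Equiv.prodCongr e.symm (Equiv.refl (Fin 3))) := by
      funext p; rfl
    rw [hge, rank_submatrix_cols P (Equiv.prodCongr e.symm (Equiv.refl (Fin 3))), hPr,
      Fintype.card_congr e]
  calc colSpanRank F (P.submatrix id g) S = colSpanRank F P (g '' S) :=
        colSpanRank_submatrix_id P g S
    _ = colSpanRank (ZMod 2) (IASmat A) (g '' S) := hP _ (subtrans_image_reindex e hS)
    _ = colSpanRank (ZMod 2) ((IASmat A).submatrix (⇑e.symm) id) (g '' S) :=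
        (colSpanRank_rowequiv _ e.symm _).symm
    _ = colSpanRank (ZMod 2) (((IASmat A).submatrix (⇑e.symm) id).submatrix id g) S :=
        (colSpanRank_submatrix_id _ g S).symm
    _ = colSpanRank (ZMod 2) (IASmat (Matrix.of fun u u' => A (e.symm u) (e.symm u'))) S := by
        rw [IASmat_reindex]

lemma z3_reindex_iff (e : V ≃ V') (A : Matrix V V (ZMod 2)) :
    (Z3Rep F A ↔ Z3Rep F (Matrix.of fun u u' => A (e.symm u) (e.symm u'))) ∧
    (Z3RepStrict F A ↔ Z3RepStrict F (Matrix.of fun u u' => A (e.symm u) (e.symm u'))) := by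
  have hback : (Matrix.of fun (u u' : V) =>
      (Matrix.of fun w w' => A (e.symm w) (e.symm w')) (e.symm.symm u) (e.symm.symm u')) = A := by
    ext i j
    simp
  refine ⟨⟨z3rep_reindex_mp F e A, fun h => ?_⟩, ⟨z3repStrict_reindex_mp F e A, fun h => ?_⟩⟩
  · have := z3rep_reindex_mp F e.symm _ h
    rwa [hback] at this
  · have := z3repStrict_reindex_mp F e.symm _ h
    rwa [hback] at this

end Relabel
/-- If looped simple graphs `G` and `H` are locally equivalent up to isomorphism, then
`Z₃(G)` is (strictly) representable over `F` iff `Z₃(H)` is (strictly) representable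
over `F`. -/
theorem Z3_representable_local_equivalence
    {V V' : Type} [Fintype V] [DecidableEq V] [Fintype V'] [DecidableEq V']
    (A : Matrix V V (ZMod 2)) (B : Matrix V' V' (ZMod 2))
    (hA : A.IsSymm) (hB : B.IsSymm)
    (e : V ≃ V')
    (h : LocEquiv (Matrix.of fun u u' => A (e.symm u) (e.symm u')) B)
    (F : Type) [Field F] :
    (Z3Rep F A ↔ Z3Rep F B) ∧ (Z3RepStrict F A ↔ Z3RepStrict F B) := by
  have hA' : (Matrix.of fun u u' => A (e.symm u) (e.symm u')).IsSymm := by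
    apply Matrix.IsSymm.ext
    intro i j
    exact hA.apply _ _
  obtain ⟨hsymm_iff, hmain⟩ := locEquiv_goodRel F h
  obtain ⟨h1, h2⟩ := hmain hA'
  obtain ⟨r1, r2⟩ := z3_reindex_iff F e A
  exact ⟨r1.trans h1, r2.trans h2⟩
end
end

section
/- Let G be a simple graph with n vertices and F a field over which Z₃(G) is representable. Then for some m ≥ n there is an m×3n matrix P over F of the block form P = [[I, A, B],[0, 0, C]] such that: (1) P represents a matroid that shelters Z₃(G), with the columns of I, A and B corresponding to the φ, χ and ψ elements respectively; (2) I is the n×n identity matrix; and (3) A has nonzero entries in precisely the same positions where the adjacency matrix A(G) has nonzero entries. If moreover Z₃(G) is strictly representable over F, then P can be chosen satisfying additionally: (4) C = 0; (5) every diagonal entry of B equals 1; and (6) B_{vw}·B_{wv} = 1 whenever v and w are adjacent in G. -/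
/-!
Write a representing matrix `Q` in coordinates with respect to a basis of its column space
that extends the `φ`-columns; these are independent because `Z₃(G)` gives them rank `n`. This
makes the `φ`-block `[I; 0]` without changing any rank, and in the strict case no basis vectors
are added.
If the `φ`-columns are unit vectors, a set of columns consisting of the `φ`-columns over `s` and
further columns `X` has rank `|s|` plus the rank of `X` restricted to the rows outside `s`, both
for `IAS(G)` and for the new matrix. Comparing these residual ranks for `s = V ∖ {u, v}` and
`X = {χ(u)}` gives the support of the `χ`-block; in the strict case `X = {ψ(v)}` shows that the
`ψ`-block has nonzero diagonal and `X = {ψ(v), ψ(u)}` that its `2 × 2` minor at an edge `uv`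
vanishes, so rescaling the `ψ`-columns to unit diagonal gives `B_{vu} B_{uv} = 1`.
-/

open Matrix

noncomputable section

open Submodule Module

theorem finrank_span_union_eq_add_of_span_eq_ker {K M N : Type*} [Field K] [AddCommGroup M]
    [Module K M] [FiniteDimensional K M] [AddCommGroup N] [Module K N]
    (f : M →ₗ[K] N) {S : Set M} (hS : span K S = LinearMap.ker f) (X : Set M) :
    finrank K (span K (S ∪ X)) = finrank K (span K S) + finrank K (span K (f '' X)) := by
  have hker : LinearMap.ker f ≤ span K (S ∪ X) := hS ▸ span_mono Set.subset_union_left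
  have hmap : (span K (S ∪ X)).map f = span K (f '' X) := by
    rw [span_union, Submodule.map_sup, hS, map_span]
    exact sup_eq_right.2 (map_le_iff_le_comap.2 fun x hx => by simp [LinearMap.mem_ker.1 hx])
  have := (f.domRestrict (span K (S ∪ X))).finrank_range_add_finrank_ker
  rw [LinearMap.range_domRestrict, hmap, LinearMap.ker_domRestrict,
    (comapSubtypeEquivOfLe hker).finrank_eq, ← hS] at this
  omega

section Coordinates

variable {K ι : Type*} [Field K] [Fintype ι] [DecidableEq ι]

theorem span_single_image_eq_ker_funLeft (s : Set ι) :
    span K ((fun i => Pi.single i (1 : K)) '' s) =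
      LinearMap.ker (LinearMap.funLeft K K ((↑) : ↥sᶜ → ι)) := by
  apply le_antisymm
  · rw [span_le]
    rintro _ ⟨i, hi, rfl⟩
    ext ⟨j, hj⟩
    have hji : j ≠ i := fun h => hj (h ▸ hi)
    simp [LinearMap.funLeft, hji]
  · intro f hf
    have hf' : ∀ j ∉ s, f j = 0 := fun j hj => congr_fun hf ⟨j, hj⟩
    rw [← Finset.univ_sum_single f]
    refine sum_mem fun i _ => ?_
    by_cases hi : i ∈ s
    · convert smul_mem _ (f i) (subset_span (Set.mem_image_of_mem _ hi)) using 1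
      rw [← Pi.single_smul', smul_eq_mul, mul_one]
    · simp [hf' i hi]

theorem finrank_span_single_image (s : Set ι) :
    finrank K (span K ((fun i => Pi.single i (1 : K)) '' s)) = s.ncard := by
  classical
  have hli : LinearIndependent K (fun i : s => (Pi.single (i : ι) 1 : ι → K)) := by
    simpa [Function.comp_def] using
      (Pi.basisFun K ι).linearIndependent.comp _ Subtype.val_injective
  rw [Set.image_eq_range, finrank_span_eq_card hli, ← Nat.card_eq_fintype_card,
    Nat.card_coe_set_eq]

theorem finrank_span_single_image_union (s : Set ι) (X : Set (ι → K)) :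
    finrank K (span K ((fun i => Pi.single i (1 : K)) '' s ∪ X)) =
      s.ncard + finrank K (span K (LinearMap.funLeft K K ((↑) : ↥sᶜ → ι) '' X)) := by
  rw [finrank_span_union_eq_add_of_span_eq_ker _ (span_single_image_eq_ker_funLeft s),
    finrank_span_single_image]

end Coordinates

theorem mul_eq_mul_of_finrank_span_pair_lt_two {K κ : Type*} [Field K] {x y : κ → K}
    (h : finrank K (span K {x, y}) < 2) (p q : κ) : x p * y q = x q * y p := by
  by_contra hne
  have hd : x p * y q - x q * y p ≠ 0 := sub_ne_zero.2 hne
  have hli : LinearIndependent K ![x, y] := by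
    refine LinearIndependent.pair_iff.2 fun a b hab => ?_
    have hp : a * x p + b * y p = 0 := by simpa using congr_fun hab p
    have hq : a * x q + b * y q = 0 := by simpa using congr_fun hab q
    have ha : a * (x p * y q - x q * y p) = 0 := by linear_combination y q * hp - y p * hq
    have hb : b * (x p * y q - x q * y p) = 0 := by linear_combination x p * hq - x q * hp
    exact ⟨(mul_eq_zero.1 ha).resolve_right hd, (mul_eq_zero.1 hb).resolve_right hd⟩
  have h2 := finrank_span_eq_card hli
  rw [Matrix.range_cons_cons_empty, Fintype.card_fin] at h2
  omega

theorem colSpanRank_mul_diagonal {K m n : Type*} [Field K] [Fintype n] [DecidableEq n]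
    (M : Matrix m n K) {d : n → K} (hd : ∀ p, d p ≠ 0) (S : Set n) :
    colSpanRank K (M * diagonal d) S = colSpanRank K M S := by
  have hcol : ∀ p, (fun i => (M * diagonal d) i p) = d p • fun i => M i p := fun p => by
    ext i
    simp [mul_comm]
  have hcol' : ∀ p, (fun i => M i p) = (d p)⁻¹ • fun i => (M * diagonal d) i p := fun p => by
    rw [hcol, inv_smul_smul₀ (hd p)]
  have hspan :
      span K ((fun p i => (M * diagonal d) i p) '' S) = span K ((fun p i => M i p) '' S) := by
    apply le_antisymm <;> rw [span_le] <;> rintro _ ⟨p, hp, rfl⟩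
    · simp only [hcol]
      exact smul_mem _ _ (subset_span ⟨p, hp, rfl⟩)
    · simp only [hcol']
      exact smul_mem _ _ (subset_span ⟨p, hp, rfl⟩)
  rw [colSpanRank, colSpanRank, hspan]

theorem Module.Basis.sumExtend_inl {K M ι : Type*} [DivisionRing K] [AddCommGroup M]
    [Module K M] {v : ι → M} (hv : LinearIndependent K v) (i : ι) :
    Basis.sumExtend hv (Sum.inl i) = v i := by
  simp only [Basis.sumExtend, Basis.reindex_apply, Basis.coe_extend]
  rfl

theorem exists_colSpanRank_eq_with_unit_cols {K m n V : Type*} [Field K] [Fintype m]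
    [Fintype n] [Fintype V] [DecidableEq V] (Q : Matrix m n K) (b : V → n)
    (hb : LinearIndependent K fun w i => Q i (b w)) :
    ∃ (t : ℕ) (P : Matrix (V ⊕ Fin t) n K), (∀ S, colSpanRank K P S = colSpanRank K Q S) ∧
      (∀ w, (fun i => P i (b w)) = Pi.single (Sum.inl w) 1) ∧ Fintype.card V + t = Q.rank := by
  let U := span K (Set.range Q.col)
  let c : n → U := fun p => ⟨Q.col p, subset_span ⟨p, rfl⟩⟩
  have hcb : LinearIndependent K (c ∘ b) := LinearIndependent.of_comp U.subtype hb
  let B₀ := Basis.sumExtend hcb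
  have : Finite (Basis.sumExtendIndex hcb) :=
    (Module.Finite.finite_basis B₀).of_injective _ Sum.inr_injective
  let B := B₀.reindex (Equiv.sumCongr (Equiv.refl V) (Finite.equivFin _))
  refine ⟨_, Matrix.of fun i p => B.equivFun (c p) i, fun S => ?_, fun w => ?_, ?_⟩
  · have hP : (fun p i => (Matrix.of fun i p => B.equivFun (c p) i) i p) '' S =
        B.equivFun.toLinearMap '' (c '' S) := by
      rw [Set.image_image]
      rfl
    have hQ : (fun p i => Q i p) '' S = U.subtype '' (c '' S) := by
      rw [Set.image_image]
      rfl
    rw [colSpanRank, colSpanRank, hP, hQ, ← map_span, ← map_span, LinearEquiv.finrank_map_eq,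
      Submodule.finrank_map_subtype_eq]
  · have hB : B (Sum.inl w) = c (b w) := by
      rw [Basis.reindex_apply, Equiv.sumCongr_symm, Equiv.sumCongr_apply, Sum.map_inl]
      exact Basis.sumExtend_inl hcb w
    ext i
    rw [Matrix.of_apply, ← hB, B.equivFun_self, Pi.single_apply]
    simp only [eq_comm]
  · rw [Matrix.rank_eq_finrank_span_cols, Module.finrank_eq_nat_card_basis B₀, Nat.card_sum,
      Nat.card_eq_fintype_card (α := V)]

section TestSets

variable {V : Type*}

def testSet (s : Set V) (j : Fin 3) (r : Set V) : Set (V × Fin 3) :=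
  (·, 0) '' s ∪ (·, j) '' r

theorem subtransversal3_testSet {s r : Set V} (h : Disjoint s r) (j : Fin 3) :
    Subtransversal3 (testSet s j r) := by
  simp only [Subtransversal3, testSet, Set.mem_union, Set.mem_image, Prod.mk.injEq]
  rintro v i i' (⟨w, hw, rfl, rfl⟩ | ⟨w, hw, rfl, rfl⟩)
    (⟨w', hw', rfl, rfl⟩ | ⟨w', hw', rfl, rfl⟩)
  · rfl
  · exact absurd hw' (Set.disjoint_left.1 h hw)
  · exact absurd hw (Set.disjoint_left.1 h hw')
  · rfl

variable {K : Type*} [Field K] {m : Type*}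

def residualRank (M : Matrix m (V × Fin 3) K) (e : V → m) (s : Set V) (j : Fin 3)
    (r : Set V) : ℕ :=
  finrank K (span K ((fun w (i : ↥(e '' s)ᶜ) => M i (w, j)) '' r))

theorem colSpanRank_testSet [Fintype m] [DecidableEq m] {M : Matrix m (V × Fin 3) K}
    {e : V → m} (he : Function.Injective e)
    (hφ : ∀ w, (fun i => M i (w, 0)) = Pi.single (e w) 1) (s : Set V) (j : Fin 3) (r : Set V) :
    colSpanRank K M (testSet s j r) = s.ncard + residualRank M e s j r := by
  have himage : (fun p i => M i p) '' testSet s j r =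
      (fun i => Pi.single i 1) '' (e '' s) ∪ (fun w i => M i (w, j)) '' r := by
    simp only [testSet, Set.image_union, Set.image_image, hφ]
  rw [colSpanRank, himage, finrank_span_single_image_union, Set.ncard_image_of_injective s he,
    residualRank, Set.image_image]
  rfl

end TestSets

section Residual

variable {V K m : Type*} [Field K]

theorem residualRank_singleton_eq_zero_iff (M : Matrix m (V × Fin 3) K) (e : V → m)
    (s : Set V) (j : Fin 3) (u : V) :
    residualRank M e s j {u} = 0 ↔ ∀ i ∉ e '' s, M i (u, j) = 0 := by
  rw [residualRank, Set.image_singleton, Submodule.finrank_eq_zero, span_singleton_eq_bot,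
    funext_iff, Subtype.forall]
  rfl

theorem mul_eq_mul_of_residualRank_pair_lt_two {M : Matrix m (V × Fin 3) K} {e : V → m}
    {s : Set V} {j : Fin 3} {v u : V} (h : residualRank M e s j {v, u} < 2)
    {p q : m} (hp : p ∉ e '' s) (hq : q ∉ e '' s) :
    M p (v, j) * M q (u, j) = M q (v, j) * M p (u, j) := by
  rw [residualRank, Set.image_pair] at h
  exact mul_eq_mul_of_finrank_span_pair_lt_two h ⟨p, hp⟩ ⟨q, hq⟩

end Residual

section IAS

variable {V : Type*} [DecidableEq V] {A : Matrix V V (ZMod 2)}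

theorem IASmat_phi (A : Matrix V V (ZMod 2)) (w : V) :
    (fun i => IASmat A i (w, 0)) = Pi.single w 1 := by
  ext i
  simp [IASmat, Pi.single_apply]

theorem residualRank_IASmat_chi_eq_zero_iff (hdiag : ∀ v, A v v = 0) (v u : V) :
    residualRank (IASmat A) id {v, u}ᶜ 1 {u} = 0 ↔ A v u = 0 := by
  simp only [residualRank_singleton_eq_zero_iff, Set.image_id, Set.mem_compl_iff, not_not,
    Set.mem_insert_iff, Set.mem_singleton_iff]
  refine ⟨fun h => h v (Or.inl rfl), fun h i hi => ?_⟩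
  obtain rfl | rfl := hi
  exacts [h, hdiag i]

theorem residualRank_IASmat_psi_ne_zero (hdiag : ∀ v, A v v = 0) (v : V) :
    residualRank (IASmat A) id {v}ᶜ 2 {v} ≠ 0 := by
  rw [Ne, residualRank_singleton_eq_zero_iff]
  push Not
  exact ⟨v, by simp, by simp [IASmat, hdiag]⟩

theorem residualRank_IASmat_psi_pair_lt_two (hdiag : ∀ v, A v v = 0) {v u : V}
    (hvu : A v u = 1) (huv : A u v = 1) :
    residualRank (IASmat A) id {v, u}ᶜ 2 {v, u} < 2 := by
  have hne : v ≠ u := by rintro rfl; simp [hdiag] at hvu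
  have hcol : (fun (i : ↥(id '' ({v, u} : Set V)ᶜ)ᶜ) => IASmat A i (v, 2)) =
      fun (i : ↥(id '' ({v, u} : Set V)ᶜ)ᶜ) => IASmat A i (u, 2) := by
    ext ⟨i, hi⟩
    obtain rfl | rfl : i = v ∨ i = u := by simpa using hi
    · simp [IASmat, hdiag, hvu, hne]
    · simp [IASmat, hdiag, huv, hne.symm]
  rw [residualRank, Set.image_pair, hcol, Set.pair_eq_singleton]
  exact (finrank_span_le_card _).trans_lt (by simp)

end IAS

section Shelters

variable {V : Type*} [Fintype V] [DecidableEq V] {K : Type*} [Field K] {m : Type*}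

def SheltersZ3 (A : Matrix V V (ZMod 2)) (P : Matrix m (V × Fin 3) K) : Prop :=
  ∀ S, Subtransversal3 S → colSpanRank K P S = colSpanRank (ZMod 2) (IASmat A) S

variable {A : Matrix V V (ZMod 2)}

namespace SheltersZ3

theorem mul_diagonal {P : Matrix m (V × Fin 3) K} (hP : SheltersZ3 A P) {d : V × Fin 3 → K}
    (hd : ∀ p, d p ≠ 0) : SheltersZ3 A (P * diagonal d) :=
  fun S hS => (colSpanRank_mul_diagonal P hd S).trans (hP S hS)

theorem linearIndependent_phi {Q : Matrix m (V × Fin 3) K} (hQ : SheltersZ3 A Q) :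
    LinearIndependent K fun w i => Q i (w, 0) := by
  have h := hQ _ (subtransversal3_testSet (Set.disjoint_empty Set.univ) 0)
  rw [colSpanRank_testSet Function.injective_id (IASmat_phi A)] at h
  rw [testSet, Set.image_empty, Set.union_empty, residualRank, Set.image_empty, span_empty,
    finrank_bot, add_zero, Set.ncard_univ, Nat.card_eq_fintype_card, colSpanRank,
    Set.image_image, Set.image_univ] at h
  exact linearIndependent_iff_card_eq_finrank_span.2 h.symm

theorem exists_unit_phi [Fintype m] {Q : Matrix m (V × Fin 3) K} (hQ : SheltersZ3 A Q) :
    ∃ (t : ℕ) (P : Matrix (V ⊕ Fin t) (V × Fin 3) K), SheltersZ3 A P ∧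
      (∀ w, (fun i => P i (w, 0)) = Pi.single (Sum.inl w) 1) ∧ Fintype.card V + t = Q.rank := by
  obtain ⟨t, P, hrank, hφ, ht⟩ :=
    exists_colSpanRank_eq_with_unit_cols Q (·, 0) hQ.linearIndependent_phi
  exact ⟨t, P, fun S hS => (hrank S).trans (hQ S hS), hφ, ht⟩

theorem exists_psi_diag_eq_one [DecidableEq m] {P : Matrix m (V × Fin 3) K}
    (hP : SheltersZ3 A P) {e : V → m} (hφ : ∀ w, (fun i => P i (w, 0)) = Pi.single (e w) 1)
    (hψ : ∀ v, P (e v) (v, 2) ≠ 0) :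
    ∃ P' : Matrix m (V × Fin 3) K, SheltersZ3 A P' ∧
      (∀ w, (fun i => P' i (w, 0)) = Pi.single (e w) 1) ∧
      ∀ v, P' (e v) (v, 2) = 1 := by
  let d : V × Fin 3 → K := fun p => if p.2 = 2 then (P (e p.1) (p.1, 2))⁻¹ else 1
  have hd : ∀ p, d p ≠ 0 := fun p => by
    by_cases h : p.2 = 2 <;> simp [d, h, hψ]
  refine ⟨P * diagonal d, hP.mul_diagonal hd, fun w => ?_, fun v => ?_⟩
  · rw [← hφ w]
    ext i
    simp [d]
  · simp [d, hψ]

variable [Fintype m] [DecidableEq m] {P : Matrix m (V × Fin 3) K} {e : V → m}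

theorem residualRank_eq (hP : SheltersZ3 A P) (he : Function.Injective e)
    (hφ : ∀ w, (fun i => P i (w, 0)) = Pi.single (e w) 1) {s r : Set V} (hsr : Disjoint s r)
    (j : Fin 3) :
    residualRank P e s j r = residualRank (IASmat A) id s j r := by
  have h := hP _ (subtransversal3_testSet hsr j)
  rwa [colSpanRank_testSet he hφ, colSpanRank_testSet Function.injective_id (IASmat_phi A),
    add_right_inj] at h

theorem chi_eq_zero_iff (hP : SheltersZ3 A P) (he : Function.Injective e)
    (hφ : ∀ w, (fun i => P i (w, 0)) = Pi.single (e w) 1) (hdiag : ∀ v, A v v = 0) (v u : V) :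
    (∀ i ∉ e '' {v, u}ᶜ, P i (u, 1) = 0) ↔ A v u = 0 := by
  rw [← residualRank_singleton_eq_zero_iff, hP.residualRank_eq he hφ (by simp),
    residualRank_IASmat_chi_eq_zero_iff hdiag]

theorem chi_eq_zero_of_notMem (hP : SheltersZ3 A P) (he : Function.Injective e)
    (hφ : ∀ w, (fun i => P i (w, 0)) = Pi.single (e w) 1) (hdiag : ∀ v, A v v = 0) {u : V}
    {i : m} (hi : i ∉ e '' {u}ᶜ) : P i (u, 1) = 0 := by
  rw [← Set.pair_eq_singleton] at hi
  exact (hP.chi_eq_zero_iff he hφ hdiag u u).2 (hdiag u) i hi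

theorem chi_ne_zero_iff (hP : SheltersZ3 A P) (he : Function.Injective e)
    (hφ : ∀ w, (fun i => P i (w, 0)) = Pi.single (e w) 1) (hdiag : ∀ v, A v v = 0) (v u : V) :
    P (e v) (u, 1) ≠ 0 ↔ A v u ≠ 0 := by
  rw [Ne, Ne, not_iff_not, ← hP.chi_eq_zero_iff he hφ hdiag]
  refine ⟨fun h i hi => ?_, fun h => h (e v) (by simp [he.eq_iff])⟩
  by_cases hiv : i = e v
  · rwa [hiv]
  · refine hP.chi_eq_zero_of_notMem he hφ hdiag fun ⟨w, hw, hwi⟩ => hi ⟨w, ?_, hwi⟩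
    rintro (rfl | rfl)
    exacts [hiv hwi.symm, hw rfl]

theorem psi_diag_ne_zero (hP : SheltersZ3 A P) (he : Function.Injective e)
    (hφ : ∀ w, (fun i => P i (w, 0)) = Pi.single (e w) 1) (hdiag : ∀ v, A v v = 0) {v : V}
    (hψ : ∀ i ∉ Set.range e, P i (v, 2) = 0) : P (e v) (v, 2) ≠ 0 := by
  have h := (hP.residualRank_eq he hφ (s := {v}ᶜ) (r := {v}) (by simp) 2).trans_ne
    (residualRank_IASmat_psi_ne_zero hdiag v)
  rw [Ne, residualRank_singleton_eq_zero_iff] at h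
  push Not at h
  obtain ⟨i, hi, hne⟩ := h
  obtain ⟨w, rfl⟩ : i ∈ Set.range e := by_contra fun hr => hne (hψ i hr)
  obtain rfl : w = v := by_contra fun hw => hi ⟨w, hw, rfl⟩
  exact hne

theorem psi_mul_psi (hP : SheltersZ3 A P) (he : Function.Injective e)
    (hφ : ∀ w, (fun i => P i (w, 0)) = Pi.single (e w) 1) (hdiag : ∀ v, A v v = 0) {v u : V}
    (hvu : A v u = 1) (huv : A u v = 1) :
    P (e v) (v, 2) * P (e u) (u, 2) = P (e u) (v, 2) * P (e v) (u, 2) := by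
  have h := (hP.residualRank_eq he hφ (s := {v, u}ᶜ) (r := {v, u}) (by simp) 2).trans_lt
    (residualRank_IASmat_psi_pair_lt_two hdiag hvu huv)
  exact mul_eq_mul_of_residualRank_pair_lt_two h (by simp [he.eq_iff]) (by simp [he.eq_iff])

end SheltersZ3

end Shelters

theorem SheltersZ3.phi_chi_blocks {V K : Type*} [Fintype V] [DecidableEq V] [Field K]
    {A : Matrix V V (ZMod 2)} (hdiag : ∀ v, A v v = 0) {t : ℕ}
    {P : Matrix (V ⊕ Fin t) (V × Fin 3) K} (hP : SheltersZ3 A P)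
    (hφ : ∀ w, (fun i => P i (w, 0)) = Pi.single (Sum.inl w) 1) :
    (∀ v u : V, P (Sum.inl v) (u, 0) = if v = u then 1 else 0) ∧
      (∀ (i : Fin t) (u : V), P (Sum.inr i) (u, 0) = 0) ∧
      (∀ (i : Fin t) (u : V), P (Sum.inr i) (u, 1) = 0) ∧
      (∀ v u : V, P (Sum.inl v) (u, 1) ≠ 0 ↔ A v u ≠ 0) := by
  refine ⟨fun v u => ?_, fun i u => ?_, fun i u => ?_,
    hP.chi_ne_zero_iff Sum.inl_injective hφ hdiag⟩
  · simpa [Pi.single_apply, eq_comm] using congr_fun (hφ u) (Sum.inl v)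
  · simpa using congr_fun (hφ u) (Sum.inr i)
  · exact hP.chi_eq_zero_of_notMem Sum.inl_injective hφ hdiag (by simp)

/-- The rows are indexed by `V ⊕ Fin t`, so `m = n + t`; the blocks `I`, `A`, `B` are the
`φ`, `χ`, `ψ` columns on the rows `Sum.inl`. -/
theorem Z3_standard_representation
    {V : Type} [Fintype V] [DecidableEq V] (A : Matrix V V (ZMod 2))
    (hsym : A.IsSymm) (hdiag : ∀ v, A v v = 0) (F : Type) [Field F] :
    (Z3Rep F A →
      ∃ (t : ℕ) (P : Matrix (V ⊕ Fin t) (V × Fin 3) F),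
        (∀ v u : V, P (Sum.inl v) (u, 0) = if v = u then 1 else 0) ∧
        (∀ (i : Fin t) (u : V), P (Sum.inr i) (u, 0) = 0) ∧
        (∀ (i : Fin t) (u : V), P (Sum.inr i) (u, 1) = 0) ∧
        (∀ v u : V, P (Sum.inl v) (u, 1) ≠ 0 ↔ A v u ≠ 0) ∧
        (∀ S : Set (V × Fin 3), Subtransversal3 S →
          colSpanRank F P S = colSpanRank (ZMod 2) (IASmat A) S)) ∧
    (Z3RepStrict F A →
      ∃ (t : ℕ) (P : Matrix (V ⊕ Fin t) (V × Fin 3) F),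
        (∀ v u : V, P (Sum.inl v) (u, 0) = if v = u then 1 else 0) ∧
        (∀ (i : Fin t) (u : V), P (Sum.inr i) (u, 0) = 0) ∧
        (∀ (i : Fin t) (u : V), P (Sum.inr i) (u, 1) = 0) ∧
        (∀ v u : V, P (Sum.inl v) (u, 1) ≠ 0 ↔ A v u ≠ 0) ∧
        (∀ S : Set (V × Fin 3), Subtransversal3 S →
          colSpanRank F P S = colSpanRank (ZMod 2) (IASmat A) S) ∧
        (∀ (i : Fin t) (u : V), P (Sum.inr i) (u, 2) = 0) ∧
        (∀ v : V, P (Sum.inl v) (v, 2) = 1) ∧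
        (∀ v u : V, A v u = 1 → P (Sum.inl v) (u, 2) * P (Sum.inl u) (v, 2) = 1)) := by
  constructor
  · rintro ⟨k, Q, hQ⟩
    obtain ⟨t, P, hP, hφ, -⟩ := SheltersZ3.exists_unit_phi (A := A) hQ
    obtain ⟨h₁, h₂, h₃, h₄⟩ := hP.phi_chi_blocks hdiag hφ
    exact ⟨t, P, h₁, h₂, h₃, h₄, hP⟩
  · rintro ⟨k, Q, hrank, hQ⟩
    obtain ⟨t, P, hP, hφ, ht⟩ := SheltersZ3.exists_unit_phi (A := A) hQ
    obtain rfl : t = 0 := by omega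
    have hrows : ∀ i : V ⊕ Fin 0, i ∈ Set.range Sum.inl := fun i => by
      rcases i with w | i
      exacts [⟨w, rfl⟩, i.elim0]
    have hψ : ∀ v, P (Sum.inl v) (v, 2) ≠ 0 := fun v =>
      hP.psi_diag_ne_zero Sum.inl_injective hφ hdiag fun i hi => (hi (hrows i)).elim
    obtain ⟨P', hP', hφ', hone⟩ := hP.exists_psi_diag_eq_one hφ hψ
    obtain ⟨h₁, h₂, h₃, h₄⟩ := hP'.phi_chi_blocks hdiag hφ'
    refine ⟨0, P', h₁, h₂, h₃, h₄, hP', fun i => i.elim0, hone, fun v u hvu => ?_⟩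
    have h := hP'.psi_mul_psi Sum.inl_injective hφ' hdiag hvu (by rwa [hsym.apply])
    rw [hone, hone, one_mul] at h
    rw [h, mul_comm]
end
end

section
/- Let w be a double occurrence word on a finite set V with interlacement graph G = I(w). For distinct v, u ∈ V define β(v,u) ∈ GF(2) by: β(v,u) = 0 if the interior of v contains the second occurrence of u but not the first, or contains neither occurrence of u; and β(v,u) = 1 if the interior of v contains the first occurrence of u but not the second, or contains both occurrences of u. Then β is a solution of the Naji equations for G. -/
open Matrix

noncomputable section

/-- `w` is a double occurrence word on `V`: each element of `V` occurs exactly twice. -/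
def IsDOW {V : Type*} [DecidableEq V] (w : List V) : Prop := ∀ v : V, w.count v = 2

/-- Distinct `u` and `v` are interlaced in `w`: their occurrences appear in the order
`u v u v` or `v u v u`. -/
def Interlaced {V : Type*} (w : List V) (u v : V) : Prop :=
  [u, v, u, v].Sublist w ∨ [v, u, v, u].Sublist w

/-- The position of the first occurrence `v⁻` of `v` in `w`. -/
def fstIdx {V : Type*} [DecidableEq V] (w : List V) (v : V) : ℕ :=
  w.findIdx (fun x => decide (x = v))

/-- The position of the second occurrence `v⁺` of `v` in `w`. -/
def sndIdx {V : Type*} [DecidableEq V] (w : List V) (v : V) : ℕ :=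
  fstIdx w v + 1 + (w.drop (fstIdx w v + 1)).findIdx (fun x => decide (x = v))

/-- Position `k` lies in the interior of `v` in `w`, i.e. strictly between `v⁻` and `v⁺`. -/
def inInterior {V : Type*} [DecidableEq V] (w : List V) (v : V) (k : ℕ) : Prop :=
  fstIdx w v < k ∧ k < sndIdx w v

instance {V : Type*} [DecidableEq V] (w : List V) (v : V) (k : ℕ) :
    Decidable (inInterior w v k) := by unfold inInterior; infer_instance


/-- The Naji assignment extracted from a double occurrence word: `β(v,u) = 1` iff the
interior of `v` contains the first occurrence of `u` (equivalently: contains `u⁻` but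
not `u⁺`, or both occurrences of `u`). -/
def najiBeta {V : Type*} [DecidableEq V] (w : List V) (v u : V) : ZMod 2 :=
  if inInterior w v (fstIdx w u) then 1 else 0

/-! `najiBeta w v u = 1` exactly when `u⁻` lies strictly between `v⁻` and `v⁺`. So both `β` and
interlacement depend only on the relative order of the endpoints, and in a double occurrence word
the endpoints of distinct letters are distinct positions. Each Naji equation thereby becomes a
statement about the order of at most six distinct points, settled by case analysis. -/

open List

section Sublist

variable {α : Type*} {l w : List α}

theorem sublist_iff_exists_pairwise_map_getElem? :
    l <+ w ↔ ∃ is : List ℕ, is.Pairwise (· < ·) ∧ is.map (w[·]?) = l.map some := by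
  constructor
  · intro h
    obtain ⟨is, rfl, hp⟩ := sublist_eq_map_getElem h
    exact ⟨is.map Fin.val, pairwise_map.mpr hp, by simp⟩
  · rintro ⟨is, hp, hmap⟩
    have hlt : ∀ i ∈ is, i < w.length := fun i hi => by
      obtain ⟨a, -, ha⟩ := mem_map.mp (hmap ▸ mem_map_of_mem hi : w[i]? ∈ l.map some)
      exact (List.getElem?_eq_some_iff.mp ha.symm).1
    have hsub := map_getElem_sublist (l := w) (is := is.pmap Fin.mk hlt)
      (by simpa [pairwise_pmap] using hp.imp fun h _ _ => h)
    convert hsub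
    apply map_injective_iff.mpr (Option.some_injective α)
    rw [← hmap, map_pmap]
    exact ext_getElem (by simp) fun k _ _ => by simp

end Sublist

section Occurrences

variable {α : Type*} [DecidableEq α] {w : List α} {a : α} {k : ℕ}

theorem fstIdx_le_of_getElem?_eq (h : w[k]? = some a) : fstIdx w a ≤ k := by
  obtain ⟨hk, rfl⟩ := List.getElem?_eq_some_iff.mp h
  by_contra! hlt
  simpa using not_of_lt_findIdx hlt

theorem getElem?_fstIdx (h : a ∈ w) : w[fstIdx w a]? = some a := by
  have hlt : fstIdx w a < w.length := findIdx_lt_length_of_exists ⟨a, h, by simp⟩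
  exact List.getElem?_eq_some_iff.mpr ⟨hlt, of_decide_eq_true (findIdx_getElem (w := hlt))⟩

theorem sndIdx_eq (w : List α) (a : α) :
    sndIdx w a = fstIdx w a + 1 + fstIdx (w.drop (fstIdx w a + 1)) a := rfl

theorem fstIdx_lt_sndIdx (w : List α) (a : α) : fstIdx w a < sndIdx w a := by
  rw [sndIdx_eq]; omega

theorem getElem?_drop_fstIdx_eq (hk : fstIdx w a < k) :
    (w.drop (fstIdx w a + 1))[k - (fstIdx w a + 1)]? = w[k]? := by
  rw [getElem?_drop]; congr 1; omega

theorem sndIdx_le_of_getElem?_eq (hk : fstIdx w a < k) (h : w[k]? = some a) :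
    sndIdx w a ≤ k := by
  have := fstIdx_le_of_getElem?_eq ((getElem?_drop_fstIdx_eq hk).trans h)
  rw [sndIdx_eq]; omega

theorem getElem?_sndIdx (h : 2 ≤ w.count a) : w[sndIdx w a]? = some a := by
  obtain ⟨is, hp, hmap⟩ :=
    sublist_iff_exists_pairwise_map_getElem?.mp (replicate_sublist_iff.mpr h)
  rcases is with _ | ⟨i, _ | ⟨j, _ | _⟩⟩ <;>
    simp only [map_nil, map_cons, reduceReplicate, nil_eq, reduceCtorEq, cons.injEq,
      ne_cons_self, and_false, and_true] at hmap
  obtain ⟨hi, hj⟩ := hmap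
  have hij : i < j := by simpa using hp
  have hfj : fstIdx w a < j := (fstIdx_le_of_getElem?_eq hi).trans_lt hij
  have hmem : a ∈ w.drop (fstIdx w a + 1) :=
    mem_iff_getElem?.mpr ⟨_, (getElem?_drop_fstIdx_eq hfj).trans hj⟩
  rw [sndIdx_eq, ← getElem?_drop]
  exact getElem?_fstIdx hmem

theorem getElem?_eq_some_iff_of_count_eq_two (h : w.count a = 2) :
    w[k]? = some a ↔ k = fstIdx w a ∨ k = sndIdx w a := by
  have hfst : w[fstIdx w a]? = some a := getElem?_fstIdx (count_pos_iff.mp (by omega))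
  have hsnd : w[sndIdx w a]? = some a := getElem?_sndIdx h.ge
  refine ⟨fun hk => ?_, by rintro (rfl | rfl) <;> assumption⟩
  obtain hfk | hfk := (fstIdx_le_of_getElem?_eq hk).eq_or_lt
  · exact .inl hfk.symm
  obtain hsk | hsk := (sndIdx_le_of_getElem?_eq hfk hk).eq_or_lt
  · exact .inr hsk.symm
  have hsub : replicate 3 a <+ w := sublist_iff_exists_pairwise_map_getElem?.mpr
    ⟨[fstIdx w a, sndIdx w a, k], by simp [fstIdx_lt_sndIdx, hsk, hfk],
      by simp [hfst, hsnd, hk]⟩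
  have := replicate_sublist_iff.mp hsub
  omega

end Occurrences

section Interlacement

variable {V : Type*} [DecidableEq V] {w : List V} {u v : V}

theorem sublist_uvuv_iff (hu : w.count u = 2) (hv : w.count v = 2) :
    [u, v, u, v] <+ w ↔
      fstIdx w u < fstIdx w v ∧ fstIdx w v < sndIdx w u ∧ sndIdx w u < sndIdx w v := by
  have hu' := fstIdx_lt_sndIdx w u
  have hv' := fstIdx_lt_sndIdx w v
  rw [sublist_iff_exists_pairwise_map_getElem?]
  constructor
  · rintro ⟨is, hp, hmap⟩
    rcases is with _ | ⟨i, _ | ⟨j, _ | ⟨k, _ | ⟨m, _ | _⟩⟩⟩⟩ <;>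
      simp only [map_nil, map_cons, cons.injEq, nil_eq, reduceCtorEq, ne_cons_self, and_false,
        and_true] at hmap
    simp only [getElem?_eq_some_iff_of_count_eq_two hu,
      getElem?_eq_some_iff_of_count_eq_two hv] at hmap
    simp only [pairwise_cons, mem_cons, not_mem_nil, or_false, forall_eq_or_imp, forall_eq,
      IsEmpty.forall_iff, implies_true, Pairwise.nil, and_self, and_true] at hp
    omega
  · intro h
    refine ⟨[fstIdx w u, fstIdx w v, sndIdx w u, sndIdx w v], ?_, ?_⟩
    · simp only [pairwise_cons, mem_cons, not_mem_nil, or_false, forall_eq_or_imp, forall_eq,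
        IsEmpty.forall_iff, implies_true, Pairwise.nil, and_self, and_true]
      omega
    · simp [getElem?_eq_some_iff_of_count_eq_two hu, getElem?_eq_some_iff_of_count_eq_two hv]

theorem interlaced_iff (hu : w.count u = 2) (hv : w.count v = 2) :
    Interlaced w u v ↔
      (fstIdx w u < fstIdx w v ∧ fstIdx w v < sndIdx w u ∧ sndIdx w u < sndIdx w v) ∨
      (fstIdx w v < fstIdx w u ∧ fstIdx w u < sndIdx w v ∧ sndIdx w v < sndIdx w u) := by
  rw [Interlaced, sublist_uvuv_iff hu hv, sublist_uvuv_iff hv hu]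

theorem endpoints_pairwise_ne (hu : w.count u = 2) (hv : w.count v = 2) (huv : u ≠ v) :
    fstIdx w u ≠ fstIdx w v ∧ fstIdx w u ≠ sndIdx w v ∧
      sndIdx w u ≠ fstIdx w v ∧ sndIdx w u ≠ sndIdx w v := by
  have key : ∀ {i j : ℕ}, w[i]? = some u → w[j]? = some v → i ≠ j := by
    rintro i j hi hj rfl
    exact huv (Option.some_injective _ (hi.symm.trans hj))
  simp only [getElem?_eq_some_iff_of_count_eq_two hu, getElem?_eq_some_iff_of_count_eq_two hv]
    at key
  exact ⟨key (.inl rfl) (.inl rfl), key (.inl rfl) (.inr rfl),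
    key (.inr rfl) (.inl rfl), key (.inr rfl) (.inr rfl)⟩

end Interlacement

section Naji

variable {V : Type*} [DecidableEq V] {w : List V} {u v x : V}

theorem najiBeta_add_najiBeta_swap_eq_one (hv : w.count v = 2) (hu : w.count u = 2)
    (h : Interlaced w v u) : najiBeta w v u + najiBeta w u v = 1 := by
  rw [interlaced_iff hv hu] at h
  unfold najiBeta
  split_ifs <;> simp only [inInterior] at * <;> first | decide | omega

theorem najiBeta_eq_of_not_interlaced (hv : w.count v = 2) (hu : w.count u = 2)
    (hx : w.count x = 2) (hxv : x ≠ v) (hxu : x ≠ u) (hvu : Interlaced w v u)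
    (hnv : ¬ Interlaced w x v) (hnu : ¬ Interlaced w x u) :
    najiBeta w x v = najiBeta w x u := by
  rw [interlaced_iff hv hu] at hvu
  rw [interlaced_iff hx hv] at hnv
  rw [interlaced_iff hx hu] at hnu
  have := endpoints_pairwise_ne hx hv hxv
  have := endpoints_pairwise_ne hx hu hxu
  unfold najiBeta
  split_ifs <;> simp only [inInterior] at * <;> first | rfl | omega

theorem najiBeta_path_sum_eq_one (hv : w.count v = 2) (hu : w.count u = 2)
    (hx : w.count x = 2) (hux : u ≠ x) (hvu : Interlaced w v u) (hvx : Interlaced w v x)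
    (hnux : ¬ Interlaced w u x) :
    najiBeta w v u + najiBeta w v x + najiBeta w u x + najiBeta w x u = 1 := by
  rw [interlaced_iff hv hu] at hvu
  rw [interlaced_iff hv hx] at hvx
  rw [interlaced_iff hu hx] at hnux
  have := endpoints_pairwise_ne hu hx hux
  unfold najiBeta
  split_ifs <;> simp only [inInterior] at * <;> first | decide | omega

end Naji

theorem najiBeta_solves_naji_equations_general
    {V : Type} [DecidableEq V] (w : List V) (hw : IsDOW w) :
    (∀ v u : V, v ≠ u → Interlaced w v u →
      najiBeta w v u + najiBeta w u v = 1) ∧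
    (∀ v u x : V, v ≠ u → Interlaced w v u → x ≠ v → x ≠ u →
      ¬ Interlaced w x v → ¬ Interlaced w x u →
      najiBeta w x v + najiBeta w x u = 0) ∧
    (∀ v u x : V, v ≠ u → v ≠ x → u ≠ x →
      Interlaced w v u → Interlaced w v x → ¬ Interlaced w u x →
      najiBeta w v u + najiBeta w v x + najiBeta w u x + najiBeta w x u = 1) := by
  refine ⟨fun v u _ h => najiBeta_add_najiBeta_swap_eq_one (hw v) (hw u) h,
    fun v u x _ h hxv hxu hnv hnu => ?_,
    fun v u x _ _ hux hvu hvx hnux =>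
      najiBeta_path_sum_eq_one (hw v) (hw u) (hw x) hux hvu hvx hnux⟩
  rw [najiBeta_eq_of_not_interlaced (hw v) (hw u) (hw x) hxv hxu h hnv hnu]
  exact CharTwo.add_self_eq_zero _

/-- `najiBeta w` is a solution of the Naji equations for the interlacement graph
`I(w)` (where distinct `u,v` are adjacent iff they are interlaced in `w`). -/
theorem najiBeta_solves_naji_equations
    {V : Type} [Fintype V] [DecidableEq V] (w : List V) (hw : IsDOW w) :
    (∀ v u : V, v ≠ u → Interlaced w v u →
      najiBeta w v u + najiBeta w u v = 1) ∧
    (∀ v u x : V, v ≠ u → Interlaced w v u → x ≠ v → x ≠ u →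
      ¬ Interlaced w x v → ¬ Interlaced w x u →
      najiBeta w x v + najiBeta w x u = 0) ∧
    (∀ v u x : V, v ≠ u → v ≠ x → u ≠ x →
      Interlaced w v u → Interlaced w v x → ¬ Interlaced w u x →
      najiBeta w v u + najiBeta w v x + najiBeta w u x + najiBeta w x u = 1) :=
  najiBeta_solves_naji_equations_general w hw
end
end

section
/- Let X and Y be disjoint finite sets and A an X×Y matrix over GF(2). Let G be the simple bipartite graph on vertex set X ∪ Y in which x ∈ X and y ∈ Y are adjacent if and only if A_{xy} = 1, and no two elements of X nor two elements of Y are adjacent. Let N be the binary matroid on X ∪ Y represented by the GF(2)-matrix assigning to each x ∈ X the standard basis column e_x ∈ GF(2)^X and to each y ∈ Y the column A_{·y}. Then M[IA(G)] is isomorphic to the direct sum N ⊕ N*, via the bijection sending x ↦ φ_G(x) and y ↦ χ_G(y) on the N summand, and x ↦ χ_G(x) and y ↦ φ_G(y) on the N* summand. -/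
open Matrix

noncomputable section

/-- The columns of `M` indexed by `S` are linearly independent over `F`. -/
def ColIndep (F : Type*) [Field F] {m n : Type*} (M : Matrix m n F) (S : Set n) : Prop :=
  LinearIndependent F (fun j : S => (fun i => M i (j : n)))

/-- `S` is independent in the dual of the column matroid of `M`: the columns
outside `S` span the whole column space of `M`. -/
def DualColIndep (F : Type*) [Field F] {m n : Type*} (M : Matrix m n F) (S : Set n) : Prop :=
  colSpanRank F M Sᶜ = colSpanRank F M Set.univ

/-- The adjacency matrix of the bipartite graph on `X ⊕ Y` determined by the
GF(2)-matrix `A`. -/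
def bipAdj {X Y : Type*} (A : Matrix X Y (ZMod 2)) :
    Matrix (X ⊕ Y) (X ⊕ Y) (ZMod 2) :=
  Matrix.of fun a b =>
    match a, b with
    | Sum.inl x, Sum.inr y => A x y
    | Sum.inr y, Sum.inl x => A x y
    | _, _ => 0

/-- The representation `(I | A)` of the binary matroid `N` on `X ⊕ Y`. -/
def Nmat {X Y : Type*} [DecidableEq X] (A : Matrix X Y (ZMod 2)) :
    Matrix X (X ⊕ Y) (ZMod 2) :=
  Matrix.of fun i c =>
    match c with
    | Sum.inl x => if i = x then 1 else 0
    | Sum.inr y => A i y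


/-- The bijection from the ground set of `N ⊕ N*` to `W₂(G)`: on the `N` summand,
`x ↦ φ(x)` and `y ↦ χ(y)`; on the `N*` summand, `x ↦ χ(x)` and `y ↦ φ(y)`. -/
def sumToW2 {X Y : Type*} : (X ⊕ Y) ⊕ (X ⊕ Y) → (X ⊕ Y) × Fin 2
  | Sum.inl (Sum.inl x) => (Sum.inl x, 0)
  | Sum.inl (Sum.inr y) => (Sum.inr y, 1)
  | Sum.inr (Sum.inl x) => (Sum.inl x, 1)
  | Sum.inr (Sum.inr y) => (Sum.inr y, 0)

/-!
Reindexing the columns of `IA(G)` along `sumToW2` turns it into the block-diagonal matrix with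
blocks `(I | A)` and `(Aᵀ | I) = (-Aᵀ | I)`, and the columns of a block-diagonal matrix are
independent iff their parts in each block are. The second block represents `N*`: its kernel is
exactly the row space `{u (I | A)}` of the first, so a dependency of its columns inside `T` is a
nonzero row combination of `(I | A)` vanishing off `T`, i.e. a witness that the columns of
`(I | A)` outside `T` do not span.
-/

section ColumnMatroid

variable {F : Type*} [Field F] {m n : Type*}

theorem linearCombination_col_eq_mulVec [Fintype n] (M : Matrix m n F) (l : n →₀ F) :
    Finsupp.linearCombination F M.col l = M *ᵥ ⇑l := by
  ext i
  simp [Finsupp.linearCombination_apply, Finsupp.sum_fintype, mulVec, dotProduct, mul_comm]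

theorem colIndep_iff_mulVec_eq_zero [Fintype n] (M : Matrix m n F) (T : Set n) :
    ColIndep F M T ↔ ∀ g : n → F, (∀ j ∉ T, g j = 0) → M *ᵥ g = 0 → g = 0 := by
  change LinearIndependent F (M.col ∘ ((↑) : T → n)) ↔ _
  rw [linearIndependent_comp_subtype_iff, linearIndepOn_iff,
    (Finsupp.linearEquivFunOnFinite F F n).forall_congr_left]
  simp [Finsupp.mem_supported', linearCombination_col_eq_mulVec]

theorem colIndep_submatrix_iff {n' : Type*} (M : Matrix m n F) {e : n' → n}
    (he : Function.Injective e) (S : Set n') :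
    ColIndep F (M.submatrix id e) S ↔ ColIndep F M (e '' S) :=
  linearIndependent_equiv (f := fun j : e '' S ↦ M.col j.1) (Equiv.Set.image e S he)

theorem colIndep_fromBlocks_zero {m' n' : Type*} [Fintype n] [Fintype n']
    (B : Matrix m n F) (C : Matrix m' n' F) (S : Set (n ⊕ n')) :
    ColIndep F (fromBlocks B 0 0 C) S ↔
      ColIndep F B {j | Sum.inl j ∈ S} ∧ ColIndep F C {j | Sum.inr j ∈ S} := by
  simp only [colIndep_iff_mulVec_eq_zero, fromBlocks_mulVec, zero_mulVec, add_zero, zero_add,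
    ← Sum.elim_zero_zero, Sum.elim_eq_iff]
  constructor
  · intro h
    refine ⟨fun g hg hBg ↦ ?_, fun g hg hCg ↦ ?_⟩
    · refine (Sum.elim_eq_iff.mp (h (Sum.elim g 0) ?_ ⟨?_, ?_⟩)).1
      · exact fun j hj ↦ by cases j <;> simp_all
      · simpa using hBg
      · simp
    · refine (Sum.elim_eq_iff.mp (h (Sum.elim 0 g) ?_ ⟨?_, ?_⟩)).2
      · exact fun j hj ↦ by cases j <;> simp_all
      · simp
      · simpa using hCg
  · rintro ⟨hB, hC⟩ g hg ⟨hBg, hCg⟩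
    rw [← Sum.elim_comp_inl_inr g, hB (g ∘ Sum.inl) (fun j hj ↦ hg _ hj) hBg,
      hC (g ∘ Sum.inr) (fun j hj ↦ hg _ hj) hCg]

theorem span_eq_top_iff_dotProduct_eq_zero [Fintype m] [DecidableEq m] (S : Set (m → F)) :
    Submodule.span F S = ⊤ ↔ ∀ u : m → F, (∀ v ∈ S, u ⬝ᵥ v = 0) → u = 0 := by
  rw [← Submodule.dualAnnihilator_eq_bot_iff, Submodule.eq_bot_iff,
    (dotProductEquiv F m).symm.forall_congr_left]
  simp only [← SetLike.mem_coe, Submodule.coe_dualAnnihilator_span]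
  simp [Set.subset_def]

theorem span_col_image_eq_top_iff [Fintype m] [DecidableEq m] (M : Matrix m n F) (T : Set n) :
    Submodule.span F (M.col '' T) = ⊤ ↔
      ∀ u : m → F, (∀ j ∈ T, (u ᵥ* M) j = 0) → u = 0 := by
  simp only [span_eq_top_iff_dotProduct_eq_zero, Set.forall_mem_image]
  rfl

theorem dualColIndep_iff_vecMul_eq_zero [Fintype m] [DecidableEq m] (M : Matrix m n F)
    (hM : ∀ u : m → F, u ᵥ* M = 0 → u = 0) (T : Set n) :
    DualColIndep F M T ↔ ∀ u : m → F, (∀ j ∉ T, (u ᵥ* M) j = 0) → u = 0 := by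
  have htop : Submodule.span F (M.col '' Set.univ) = ⊤ :=
    (span_col_image_eq_top_iff M _).2 fun u hu ↦ hM u (funext fun j ↦ hu j trivial)
  change Module.finrank F (Submodule.span F (M.col '' Tᶜ)) =
    Module.finrank F (Submodule.span F (M.col '' _)) ↔ _
  rw [htop, finrank_top, ← Submodule.eq_top_iff_finrank_eq, span_col_image_eq_top_iff]
  rfl

end ColumnMatroid

section StandardRepresentation

variable {F : Type*} [Field F] {X Y : Type*} [Fintype X] [DecidableEq X] [Fintype Y]
  [DecidableEq Y]

theorem fromCols_neg_transpose_one_mulVec_eq_zero_iff (A : Matrix X Y F) (g : X ⊕ Y → F) :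
    fromCols (-Aᵀ) 1 *ᵥ g = 0 ↔ g = (g ∘ Sum.inl) ᵥ* fromCols 1 A := by
  conv_lhs => rw [fromCols_mulVec, neg_mulVec, one_mulVec, mulVec_transpose, neg_add_eq_zero]
  conv_rhs => rw [vecMul_fromCols, vecMul_one, ← Sum.elim_comp_inl_inr g, Sum.elim_eq_iff]
  simp [eq_comm]

theorem dualColIndep_fromCols_one_iff (A : Matrix X Y F) (T : Set (X ⊕ Y)) :
    DualColIndep F (fromCols 1 A) T ↔ ColIndep F (fromCols (-Aᵀ) 1) T := by
  have vecMul_inl (u : X → F) : (u ᵥ* fromCols 1 A) ∘ Sum.inl = u := by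
    rw [vecMul_fromCols, vecMul_one, Sum.elim_comp_inl]
  have vecMul_injective (u : X → F) (hu : u ᵥ* fromCols 1 A = 0) : u = 0 :=
    (vecMul_inl u).symm.trans (congrArg (· ∘ Sum.inl) hu)
  rw [dualColIndep_iff_vecMul_eq_zero _ vecMul_injective, colIndep_iff_mulVec_eq_zero]
  simp only [fromCols_neg_transpose_one_mulVec_eq_zero_iff]
  constructor
  · intro h g hg hker
    rw [hker, h (g ∘ Sum.inl) (by rwa [← hker]), zero_vecMul]
  · intro h u hu
    exact vecMul_injective u (h _ hu (by rw [vecMul_inl]))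

end StandardRepresentation

theorem Nmat_eq_fromCols {X Y : Type*} [DecidableEq X] (A : Matrix X Y (ZMod 2)) :
    Nmat A = fromCols 1 A := by
  ext i (x | y) <;> simp [Nmat, one_apply]

theorem sumToW2_injective {X Y : Type*} :
    Function.Injective (sumToW2 : (X ⊕ Y) ⊕ (X ⊕ Y) → _) := by
  rintro ((_ | _) | (_ | _)) ((_ | _) | (_ | _)) h <;> simp_all [sumToW2]

theorem IAmat_bipAdj_submatrix_sumToW2 {X Y : Type*} [DecidableEq X] [DecidableEq Y]
    (A : Matrix X Y (ZMod 2)) :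
    (IAmat (bipAdj A)).submatrix id sumToW2 =
      fromBlocks (fromCols 1 A) 0 0 (fromCols (-Aᵀ) 1) := by
  ext (_ | _) ((_ | _) | (_ | _)) <;>
    simp [IAmat, bipAdj, sumToW2, one_apply, ZMod.neg_eq_self_mod_two]

/-- `M[IA(G)]` is isomorphic to `N ⊕ N*` via `sumToW2`: a set is independent in
`N ⊕ N*` (its `N`-part is independent in `N` and its `N*`-part is independent in
the dual of `N`) iff its image is an independent set of columns of `IA(G)`. -/
theorem IA_bipartite_iso_direct_sum
    {X Y : Type} [Fintype X] [DecidableEq X] [Fintype Y] [DecidableEq Y]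
    (A : Matrix X Y (ZMod 2)) :
    ∀ S : Set ((X ⊕ Y) ⊕ (X ⊕ Y)),
      (ColIndep (ZMod 2) (Nmat A) {a | Sum.inl a ∈ S} ∧
        DualColIndep (ZMod 2) (Nmat A) {a | Sum.inr a ∈ S})
      ↔ ColIndep (ZMod 2) (IAmat (bipAdj A)) (sumToW2 '' S) := by
  intro S
  rw [Nmat_eq_fromCols, dualColIndep_fromCols_one_iff, ← colIndep_fromBlocks_zero,
    ← IAmat_bipAdj_submatrix_sumToW2, colIndep_submatrix_iff _ sumToW2_injective]
end
end

section
/- Let E = {1,2,3}×{a,b}, partitioned into the three classes ω_i = {(i,a),(i,b)} for i = 1,2,3, and let 𝒞 = {{(1,a),(2,b),(3,b)}, {(1,b),(2,a),(3,b)}, {(1,b),(2,b),(3,a)}}. There is no binary matroid M on ground set E such that for every transversal T of the partition (a set containing exactly one element of each class ω_i), the circuits of M contained in T are exactly the members of 𝒞 that are subsets of T. -/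
/-!
Over `ZMod 2` the columns of a circuit sum to zero. Adding the relations of the three members
of `𝒞`, every element `(i, 1)` occurs twice, so the columns of the transversal
`{(0,0), (1,0), (2,0)}` also sum to zero. That transversal is then dependent and contains a
circuit, which would have to be a member of `𝒞`; but every member of `𝒞` contains some `(i, 1)`.
-/

open Matrix

noncomputable section

/-- `C` is a circuit (minimal dependent set) of the column matroid of `P`. -/
def IsCircuitOf {k : ℕ} (P : Matrix (Fin k) (Fin 3 × Fin 2) (ZMod 2))
    (C : Set (Fin 3 × Fin 2)) : Prop :=
  ¬ ColIndep (ZMod 2) P C ∧ ∀ C' : Set (Fin 3 × Fin 2), C' ⊂ C → ColIndep (ZMod 2) P C'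

section LinearIndependence

variable {ι V : Type*}

theorem not_linearIndepOn_of_sum_eq_zero {R : Type*} [Ring R] [Nontrivial R]
    [AddCommGroup V] [Module R V] {v : ι → V} {s : Finset ι} (hs : s.Nonempty)
    (hsum : ∑ i ∈ s, v i = 0) : ¬LinearIndepOn R v s := by
  obtain ⟨i, hi⟩ := hs
  exact not_linearIndepOn_finset_iff.2 ⟨fun _ => 1, by simpa using hsum, i, hi, one_ne_zero⟩

theorem sum_eq_zero_of_minimal_not_linearIndepOn [AddCommGroup V] [Module (ZMod 2) V]
    {v : ι → V} {s : Finset ι}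
    (hs : Minimal (fun t : Set ι => ¬LinearIndepOn (ZMod 2) v t) s) : ∑ i ∈ s, v i = 0 := by
  classical
  obtain ⟨g, hg, i, hi, hgi⟩ := not_linearIndepOn_finset_iff.1 hs.prop
  -- the support of a dependence relation is dependent, so by minimality it is all of `s`
  have hsupp : ¬LinearIndepOn (ZMod 2) v ↑(s.filter (g · ≠ 0)) :=
    not_linearIndepOn_finset_iff.2 ⟨g,
      by rwa [Finset.sum_filter_of_ne fun j _ h => left_ne_zero_of_smul h],
      i, Finset.mem_filter.2 ⟨hi, hgi⟩, hgi⟩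
  have hg_one (j : ι) (hj : j ∈ s) : g j = 1 :=
    (by decide : ∀ a : ZMod 2, a ≠ 0 → a = 1) _
      (Finset.mem_filter.1 (hs.le_of_le hsupp (Finset.coe_subset.2 (s.filter_subset _)) hj)).2
  rw [← hg]
  exact Finset.sum_congr rfl fun j hj => by rw [hg_one j hj, one_smul]

end LinearIndependence

theorem colIndep_iff_linearIndepOn (F : Type*) [Field F] {m n : Type*} (M : Matrix m n F)
    (S : Set n) : ColIndep F M S ↔ LinearIndepOn F M.col S :=
  Iff.rfl

theorem isCircuitOf_iff_minimal {k : ℕ} (P : Matrix (Fin k) (Fin 3 × Fin 2) (ZMod 2))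
    (C : Set (Fin 3 × Fin 2)) :
    IsCircuitOf P C ↔ Minimal (fun S => ¬LinearIndepOn (ZMod 2) P.col S) C := by
  simp only [minimal_iff_forall_lt, not_not, IsCircuitOf, colIndep_iff_linearIndepOn]

theorem IsCircuitOf.sum_col_eq_zero {k : ℕ} {P : Matrix (Fin k) (Fin 3 × Fin 2) (ZMod 2)}
    {s : Finset (Fin 3 × Fin 2)} (hs : IsCircuitOf P s) : ∑ x ∈ s, P.col x = 0 :=
  sum_eq_zero_of_minimal_not_linearIndepOn ((isCircuitOf_iff_minimal P s).1 hs)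

/-- There is no binary matroid on `E = Fin 3 × Fin 2` whose circuits contained in any
transversal of the partition `{{(i,0),(i,1)}}` are exactly the members of
`𝒞 = {{(0,0),(1,1),(2,1)}, {(0,1),(1,0),(2,1)}, {(0,1),(1,1),(2,0)}}` contained in
that transversal. -/
theorem no_binary_sheltering_matroid :
    ¬ ∃ (k : ℕ) (P : Matrix (Fin k) (Fin 3 × Fin 2) (ZMod 2)),
      ∀ (t : Fin 3 → Fin 2) (C : Set (Fin 3 × Fin 2)),
        (∀ p ∈ C, p.2 = t p.1) →
        (IsCircuitOf P C ↔
          C ∈ ({ {(0,0),(1,1),(2,1)}, {(0,1),(1,0),(2,1)}, {(0,1),(1,1),(2,0)} } :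
            Set (Set (Fin 3 × Fin 2)))) := by
  rintro ⟨k, P, hP⟩
  have h₁ := IsCircuitOf.sum_col_eq_zero (s := {(0,0),(1,1),(2,1)})
    ((hP ![0,1,1] _ (by decide)).2 (by simp))
  have h₂ := IsCircuitOf.sum_col_eq_zero (s := {(0,1),(1,0),(2,1)})
    ((hP ![1,0,1] _ (by decide)).2 (by simp))
  have h₃ := IsCircuitOf.sum_col_eq_zero (s := {(0,1),(1,1),(2,0)})
    ((hP ![1,1,0] _ (by decide)).2 (by simp))
  have h₀ : ∑ x ∈ ({(0,0),(1,0),(2,0)} : Finset (Fin 3 × Fin 2)), P.col x = 0 := by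
    simp (disch := decide) only [Finset.sum_insert, Finset.sum_singleton] at h₁ h₂ h₃ ⊢
    -- scalars taken in `ZMod 2`, so the doubled columns `(i, 1)` cancel
    linear_combination (norm := match_scalars <;> decide)
      (1 : ZMod 2) • h₁ + (1 : ZMod 2) • h₂ + (1 : ZMod 2) • h₃
  obtain ⟨C, hC₀, hC⟩ := exists_minimal_le_of_wellFoundedLT
    (fun S => ¬LinearIndepOn (ZMod 2) P.col S) _
    (not_linearIndepOn_of_sum_eq_zero ⟨_, Finset.mem_insert_self _ _⟩ h₀)
  have hC𝒞 := (hP (fun _ => 0) C (fun p hp => by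
    rcases (by simpa using hC₀ hp) with rfl | rfl | rfl <;> rfl)).1
    ((isCircuitOf_iff_minimal P C).2 hC)
  rcases hC𝒞 with rfl | rfl | rfl <;> simp [Set.insert_subset_iff] at hC₀
end
end

section
/- Let M be a binary matroid on a finite set E and let G be a looped simple graph. Suppose there are a bijection v ↦ e_v from V(G) to E and a bijection f from E×{1,2} to W₂(G) satisfying f({e_v}×{1,2}) = {φ_G(v), χ_G(v)} for every v ∈ V(G), such that for every transversal T of E×{1,2} (a set containing exactly one element of each class {e}×{1,2}), a subset of T is dependent in the direct sum M* ⊕ M (with M* placed on the copy E×{1} and M on the copy E×{2}) if and only if its image under f is dependent in M[IA(G)]. Then G has no loops and G is bipartite. -/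
open Matrix

noncomputable section

private lemma fin2_aux : ∀ a b c : Fin 2, a ≠ c → b ≠ c → a = b := by decide

/-- If the binary matroid `M` (column matroid of `Q`) satisfies: for every transversal
`T` of `E × Fin 2` and every `S ⊆ T`, `S` is dependent in `M* ⊕ M` (dual on the copy
`E × {0}`, `M` on the copy `E × {1}`) iff `f '' S` is dependent in `M[IA(G)]` — where
`f` is a bijection matching the class `{e_v} × Fin 2` with `{φ_G(v), χ_G(v)}` — then
`G` has no loops and `G` is bipartite. -/
theorem bipartite_of_direct_sum_iso
    {E V : Type} [Fintype E] [DecidableEq E] [Fintype V] [DecidableEq V]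
    (k : ℕ) (Q : Matrix (Fin k) E (ZMod 2))
    (A : Matrix V V (ZMod 2)) (hsym : A.IsSymm)
    (eqv : V ≃ E) (f : E × Fin 2 ≃ V × Fin 2)
    (hf : ∀ (e : E) (i : Fin 2), (f (e, i)).1 = eqv.symm e)
    (hdep : ∀ (t : E → Fin 2) (S : Set (E × Fin 2)), (∀ p ∈ S, p.2 = t p.1) →
      ((¬ (DualColIndep (ZMod 2) Q {e | (e, (0 : Fin 2)) ∈ S} ∧
            ColIndep (ZMod 2) Q {e | (e, (1 : Fin 2)) ∈ S}))
        ↔ ¬ ColIndep (ZMod 2) (IAmat A) ((fun p => f p) '' S))) :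
    (∀ v : V, A v v = 0) ∧ ∃ c : V → Fin 2, ∀ u v : V, A u v = 1 → c u ≠ c v := by
  classical
  -- the eventual 2-coloring
  set c : V → Fin 2 := fun v => (f (eqv v, 0)).2 with hcdef
  -- the master pipeline
  have key : ∀ d : V → Fin 2,
      LinearIndependent (ZMod 2) (fun v : V => (fun i => IAmat A i (v, d v))) →
      (∑ v : V, if c v = d v then 0 else 1) = colSpanRank (ZMod 2) Q Set.univ := by
    intro d hind
    set t : E → Fin 2 := fun e => if (f (e, 0)).2 = d (eqv.symm e) then 0 else 1 with ht
    set S : Set (E × Fin 2) := {p | p.2 = t p.1} with hS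
    have hft : ∀ e : E, f (e, t e) = (eqv.symm e, d (eqv.symm e)) := by
      intro e
      by_cases hcase : (f (e, 0)).2 = d (eqv.symm e)
      · have h0 : t e = 0 := by simp [ht, hcase]
        rw [h0]
        exact Prod.ext_iff.mpr ⟨hf e 0, hcase⟩
      · have h0 : t e = 1 := by simp [ht, hcase]
        rw [h0]
        have hne : (f (e, 1)).2 ≠ (f (e, 0)).2 := by
          intro h
          have : f (e, (1:Fin 2)) = f (e, 0) :=
            Prod.ext_iff.mpr ⟨(hf e 1).trans (hf e 0).symm, h⟩
          have := f.injective this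
          simp at this
        exact Prod.ext_iff.mpr ⟨hf e 1, fin2_aux _ _ _ hne (Ne.symm hcase)⟩
    have himg : (fun p => f p) '' S = Set.range (fun v : V => (v, d v)) := by
      ext q
      constructor
      · rintro ⟨⟨e, i⟩, hmem, rfl⟩
        have hi : i = t e := hmem
        subst hi
        exact ⟨eqv.symm e, (hft e).symm⟩
      · rintro ⟨v, rfl⟩
        refine ⟨(eqv v, t (eqv v)), rfl, ?_⟩
        show f (eqv v, t (eqv v)) = _
        rw [hft (eqv v)]
        simp
    have hcol : ColIndep (ZMod 2) (IAmat A) ((fun p => f p) '' S) := by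
      rw [himg]
      unfold ColIndep
      have hginj : Function.Injective (fun v : V => (v, d v)) :=
        fun a b h => congrArg Prod.fst h
      refine (linearIndependent_equiv' (Equiv.ofInjective (fun v : V => (v, d v)) hginj)
        (f := fun j : (Set.range fun v : V => (v, d v)) => (fun i => IAmat A i (j : V × Fin 2)))
        (g := fun v : V => (fun i => IAmat A i (v, d v))) ?_).mp hind
      funext v
      simp [Equiv.ofInjective]
    have hboth : DualColIndep (ZMod 2) Q {e | (e, (0:Fin 2)) ∈ S} ∧
        ColIndep (ZMod 2) Q {e | (e, (1:Fin 2)) ∈ S} := by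
      by_contra hn
      exact (hdep t S (fun p hp => hp)).mp hn hcol
    obtain ⟨hdual, hci⟩ := hboth
    have hCset : {e : E | (e, (1:Fin 2)) ∈ S} = {e : E | t e = 1} := by
      ext e; simp [hS, eq_comm]
    have hC0 : {e : E | (e, (0:Fin 2)) ∈ S}ᶜ = {e : E | t e = 1} := by
      ext e
      simp only [Set.mem_compl_iff, Set.mem_setOf_eq, hS]
      constructor
      · intro h
        have h' : t e ≠ 0 := fun hh => h hh.symm
        omega
      · intro h hh
        rw [h] at hh
        exact absurd hh.symm one_ne_zero
    rw [hCset] at hci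
    unfold DualColIndep at hdual
    rw [hC0] at hdual
    -- rank = card
    have hcard : Fintype.card {e : E | t e = 1} = colSpanRank (ZMod 2) Q Set.univ := by
      have h2 := finrank_span_eq_card (R := ZMod 2) hci
      have h3 : (fun j (i : Fin k) => Q i j) '' {e : E | t e = 1}
          = Set.range (fun j : {e : E | t e = 1} => (fun i => Q i (j : E))) :=
        Set.image_eq_range _ _
      rw [← hdual]
      unfold colSpanRank
      rw [h3]
      exact h2.symm
    -- convert card to a sum over V
    rw [← hcard]
    have h4 : Fintype.card {e : E | t e = 1}
        = ∑ e : E, if t e = 1 then 1 else 0 := by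
      rw [Fintype.card_subtype, Finset.card_filter]
      simp
    rw [h4, ← Equiv.sum_comp eqv (fun e => if t e = 1 then 1 else 0)]
    refine Finset.sum_congr rfl fun v _ => ?_
    have : t (eqv v) = if c v = d v then 0 else 1 := by
      simp [ht, hcdef]
    rw [this]
    by_cases hp : c v = d v
    · simp [hp]
    · simp [hp]
  -- no loops
  have hloop : ∀ v : V, A v v = 0 := by
    intro v₀
    by_contra hv
    have hv1 : A v₀ v₀ = 1 := by
      have : ∀ a : ZMod 2, a ≠ 0 → a = 1 := by decide
      exact this _ hv
    have ind0 : LinearIndependent (ZMod 2)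
        (fun v : V => (fun i => IAmat A i (v, (fun _ : V => (0:Fin 2)) v))) := by
      rw [Fintype.linearIndependent_iff]
      intro g hg w
      have h := congrFun hg w
      simp [IAmat, Finset.sum_apply, mul_ite] at h
      exact h
    have ind1 : LinearIndependent (ZMod 2) (fun v : V =>
        (fun i => IAmat A i (v, (fun w : V => if w = v₀ then (1:Fin 2) else 0) v))) := by
      set d : V → Fin 2 := fun w => if w = v₀ then (1:Fin 2) else 0 with hd
      rw [Fintype.linearIndependent_iff]
      intro g hg
      have hval : ∀ i, (g v₀ * A i v₀ + if i ∈ Finset.univ.erase v₀ then g i else 0) = 0 := by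
        intro i
        have h := congrFun hg i
        simp only [Finset.sum_apply, Pi.smul_apply, smul_eq_mul, Pi.zero_apply] at h
        rw [← Finset.add_sum_erase _ _ (Finset.mem_univ v₀)] at h
        have e1 : ∑ v ∈ Finset.univ.erase v₀, g v * IAmat A i (v, d v)
            = ∑ v ∈ Finset.univ.erase v₀, if i = v then g v else 0 := by
          refine Finset.sum_congr rfl fun v hv => ?_
          have hne : v ≠ v₀ := (Finset.mem_erase.mp hv).1
          simp [IAmat, hd, hne, mul_ite]
        rw [e1, Finset.sum_ite_eq] at h
        have e2 : g v₀ * IAmat A i (v₀, d v₀) = g v₀ * A i v₀ := by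
          simp [IAmat, hd]
        rw [e2] at h
        exact h
      have h0 : g v₀ = 0 := by
        have h := hval v₀
        simpa [hv1] using h
      intro w
      by_cases hw : w = v₀
      · rwa [hw]
      · have h := hval w
        rw [h0, zero_mul, zero_add] at h
        simpa [Finset.mem_erase, hw] using h
    have k0 := key (fun _ => 0) ind0
    have k1 := key (fun w => if w = v₀ then (1:Fin 2) else 0) ind1
    rw [← k0] at k1
    -- sums agree off v₀
    have hsplit : (if c v₀ = (if v₀ = v₀ then (1:Fin 2) else 0) then 0 else 1)
        = (if c v₀ = (0:Fin 2) then 0 else 1) := by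
      have e0 := (Finset.add_sum_erase Finset.univ
        (fun v => if c v = (if v = v₀ then (1:Fin 2) else 0) then 0 else 1) (Finset.mem_univ v₀))
      have e1 := (Finset.add_sum_erase Finset.univ
        (fun v => if c v = (0:Fin 2) then 0 else 1) (Finset.mem_univ v₀))
      rw [← e0, ← e1] at k1
      have etail : ∑ v ∈ Finset.univ.erase v₀,
            (if c v = (if v = v₀ then (1:Fin 2) else 0) then 0 else 1)
          = ∑ v ∈ Finset.univ.erase v₀, (if c v = (0:Fin 2) then 0 else 1) := by
        refine Finset.sum_congr rfl fun v hvv => ?_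
        have hne : v ≠ v₀ := (Finset.mem_erase.mp hvv).1
        simp [hne]
      rw [etail] at k1
      exact Nat.add_right_cancel k1
    simp only [if_pos rfl] at hsplit
    revert hsplit
    have : ∀ a : Fin 2, ¬ ((if a = 1 then (0:ℕ) else 1) = (if a = 0 then 0 else 1)) := by decide
    exact this (c v₀)
  refine ⟨hloop, c, ?_⟩
  intro u v huv
  have hune : u ≠ v := by
    intro h
    rw [h] at huv
    rw [hloop v] at huv
    exact absurd huv.symm one_ne_zero
  have hvu : A v u = 1 := by
    have := congrFun (congrFun hsym.eq u) v
    simp [Matrix.transpose_apply] at this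
    rw [← this] at huv
    exact huv
  have ind2 : LinearIndependent (ZMod 2) (fun w : V =>
      (fun i => IAmat A i (w, (fun w : V => if w = u then (1:Fin 2) else if w = v then 1 else 0) w))) := by
    set d : V → Fin 2 := fun w => if w = u then (1:Fin 2) else if w = v then 1 else 0 with hd
    rw [Fintype.linearIndependent_iff]
    intro g hg
    have hvmem : v ∈ Finset.univ.erase u := Finset.mem_erase.mpr ⟨Ne.symm hune, Finset.mem_univ v⟩
    have hval : ∀ i, (g u * A i u + (g v * A i v +
        if i ∈ (Finset.univ.erase u).erase v then g i else 0)) = 0 := by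
      intro i
      have h := congrFun hg i
      simp only [Finset.sum_apply, Pi.smul_apply, smul_eq_mul, Pi.zero_apply] at h
      rw [← Finset.add_sum_erase _ _ (Finset.mem_univ u)] at h
      rw [← Finset.add_sum_erase _ _ hvmem] at h
      have e1 : ∑ w ∈ (Finset.univ.erase u).erase v, g w * IAmat A i (w, d w)
          = ∑ w ∈ (Finset.univ.erase u).erase v, if i = w then g w else 0 := by
        refine Finset.sum_congr rfl fun w hw => ?_
        have hne1 : w ≠ v := (Finset.mem_erase.mp hw).1
        have hne2 : w ≠ u := (Finset.mem_erase.mp (Finset.mem_erase.mp hw).2).1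
        simp [IAmat, hd, hne1, hne2, mul_ite]
      rw [e1, Finset.sum_ite_eq] at h
      have e2 : g u * IAmat A i (u, d u) = g u * A i u := by simp [IAmat, hd]
      have e3 : g v * IAmat A i (v, d v) = g v * A i v := by simp [IAmat, hd, Ne.symm hune]
      rw [e2, e3] at h
      exact h
    have hgv : g v = 0 := by
      have h := hval u
      simpa [hloop u, huv, Finset.mem_erase, hune] using h
    have hgu : g u = 0 := by
      have h := hval v
      simpa [hloop v, hvu, Finset.mem_erase, Ne.symm hune] using h
    intro w
    by_cases hw1 : w = u
    · rwa [hw1]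
    by_cases hw2 : w = v
    · rwa [hw2]
    · have h := hval w
      rw [hgu, hgv, zero_mul, zero_mul, zero_add, zero_add] at h
      simpa [Finset.mem_erase, hw1, hw2] using h
  have ind0 : LinearIndependent (ZMod 2)
      (fun w : V => (fun i => IAmat A i (w, (fun _ : V => (0:Fin 2)) w))) := by
    rw [Fintype.linearIndependent_iff]
    intro g hg w
    have h := congrFun hg w
    simp [IAmat, Finset.sum_apply, mul_ite] at h
    exact h
  have k0 := key (fun _ => 0) ind0
  have k2 := key (fun w => if w = u then (1:Fin 2) else if w = v then 1 else 0) ind2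
  rw [← k0] at k2
  -- sums agree off {u, v}
  have hvmem : v ∈ Finset.univ.erase u := Finset.mem_erase.mpr ⟨Ne.symm hune, Finset.mem_univ v⟩
  have hsplit : (if c u = (1:Fin 2) then (0:ℕ) else 1) + (if c v = (1:Fin 2) then (0:ℕ) else 1)
      = (if c u = (0:Fin 2) then (0:ℕ) else 1) + (if c v = (0:Fin 2) then (0:ℕ) else 1) := by
    set F : V → ℕ := fun w => if c w = (if w = u then (1:Fin 2) else if w = v then 1 else 0) then 0 else 1 with hF
    set G : V → ℕ := fun w => if c w = (0:Fin 2) then 0 else 1 with hG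
    have eF : ∑ w : V, F w = F u + (F v + ∑ w ∈ (Finset.univ.erase u).erase v, F w) := by
      rw [← Finset.add_sum_erase _ _ (Finset.mem_univ u), ← Finset.add_sum_erase _ _ hvmem]
    have eG : ∑ w : V, G w = G u + (G v + ∑ w ∈ (Finset.univ.erase u).erase v, G w) := by
      rw [← Finset.add_sum_erase _ _ (Finset.mem_univ u), ← Finset.add_sum_erase _ _ hvmem]
    have etail : ∑ w ∈ (Finset.univ.erase u).erase v, F w
        = ∑ w ∈ (Finset.univ.erase u).erase v, G w := by
      refine Finset.sum_congr rfl fun w hw => ?_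
      have hne1 : w ≠ v := (Finset.mem_erase.mp hw).1
      have hne2 : w ≠ u := (Finset.mem_erase.mp (Finset.mem_erase.mp hw).2).1
      simp [hF, hG, hne1, hne2]
    rw [eF, eG, etail] at k2
    have hFu : F u = if c u = (1:Fin 2) then 0 else 1 := by simp [hF]
    have hFv : F v = if c v = (1:Fin 2) then 0 else 1 := by simp [hF, Ne.symm hune]
    have hGu : G u = if c u = (0:Fin 2) then 0 else 1 := rfl
    have hGv : G v = if c v = (0:Fin 2) then 0 else 1 := rfl
    rw [hFu, hFv, hGu, hGv] at k2
    omega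
  revert hsplit
  have : ∀ a b : Fin 2, ((if a = 1 then (0:ℕ) else 1) + (if b = 1 then (0:ℕ) else 1)
      = (if a = 0 then (0:ℕ) else 1) + (if b = 0 then (0:ℕ) else 1)) → a ≠ b := by decide
  exact this (c u) (c v)
end
end

section
/- Let G be a looped simple graph with n vertices. Suppose there is an integer matrix P with n rows and columns indexed by W(G) such that: (i) every n×n submatrix of P obtained by selecting exactly one column from each triple {φ_G(v), χ_G(v), ψ_G(v)} has determinant in {−1, 0, 1}; and (ii) for every subtransversal S of W(G), the rank over ℝ of the columns of P indexed by S equals the rank over GF(2) of the columns of IAS(G) indexed by S. Then for every field F, the entrywise image of P in F also satisfies: for every subtransversal S of W(G), the rank over F of the columns indexed by S equals the rank over GF(2) of the columns of IAS(G) indexed by S. In particular, Z₃(G) is representable over every field. -/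
open Matrix

noncomputable section

/-!
Over `ℝ` and over `F` the rank of a set `S` of columns of `P` is the size of a largest
independent subset `B ⊆ S`, so it suffices to transfer independence of such `B` both ways.
An `F`-independent set of integer vectors is `ℤ`-independent (divide a relation by its gcd), hence
`ℝ`-independent. Conversely, an `ℝ`-independent subtransversal `B` is independent in `IAS(G)`, and
since the kernel of `(a, b) ↦ a + A b` is isotropic for `a·b' - a'·b` when `A` is symmetric,
it extends to a transversal `T` that is a basis of `IAS(G)`. Then `P[T]` is nonsingular over `ℝ`,
so `det P[T] = ±1` and `P[T]` stays invertible over `F`, which makes `B ⊆ T` independent over `F`.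
-/

section ColumnRank

variable {K L : Type*} [Field K] [Field L] {m m' n ι : Type*}

theorem colSpanRank_def (M : Matrix m n K) (S : Set n) :
    colSpanRank K M S = Module.finrank K (Submodule.span K (M.col '' S)) := rfl

theorem linearIndepOn_col_iff_colSpanRank_eq_ncard (M : Matrix m n K) {S : Set n}
    (hS : S.Finite) : LinearIndepOn K M.col S ↔ colSpanRank K M S = S.ncard := by
  have := hS.fintype
  rw [LinearIndepOn, linearIndependent_iff_card_eq_finrank_span, Set.finrank,
    ← Set.image_eq_range, Set.ncard_eq_toFinset_card', Set.toFinset_card, eq_comm]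
  rfl

theorem linearIndependent_col_comp_iff [Fintype ι] (M : Matrix m n K) (g : ι → n) :
    LinearIndependent K (M.col ∘ g) ↔ colSpanRank K M (Set.range g) = Fintype.card ι := by
  rw [linearIndependent_iff_card_eq_finrank_span, Set.finrank, Set.range_comp, eq_comm]
  rfl

theorem colSpanRank_le_of_linearIndepOn [Finite m] [Finite m'] (M : Matrix m n K)
    (N : Matrix m' n L) (S : Set n)
    (h : ∀ B ⊆ S, LinearIndepOn K M.col B → LinearIndepOn L N.col B) :
    colSpanRank K M S ≤ colSpanRank L N S := by
  obtain ⟨B, hBS, -, hSB, hB⟩ :=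
    exists_linearIndepOn_extension (linearIndepOn_empty K M.col) (Set.empty_subset S)
  have : Finite B := hB.finite
  have hBfin : B.Finite := B.toFinite
  calc colSpanRank K M S = colSpanRank K M B := by
        rw [colSpanRank_def, colSpanRank_def, le_antisymm (Submodule.span_le.2 hSB)
          (Submodule.span_mono (Set.image_mono hBS))]
    _ = B.ncard := (linearIndepOn_col_iff_colSpanRank_eq_ncard M hBfin).1 hB
    _ = colSpanRank L N B :=
        ((linearIndepOn_col_iff_colSpanRank_eq_ncard N hBfin).1 (h B hBS hB)).symm
    _ ≤ colSpanRank L N S := Submodule.finrank_mono (Submodule.span_mono (Set.image_mono hBS))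

theorem colSpanRank_submatrix_equiv (M : Matrix m n K) (e : m' ≃ m) (S : Set n) :
    colSpanRank K (M.submatrix e id) S = colSpanRank K M S := by
  have hcol : (M.submatrix e id).col = LinearEquiv.funCongrLeft K K e ∘ M.col := rfl
  rw [colSpanRank_def, colSpanRank_def, hcol, Set.image_comp, ← LinearEquiv.coe_coe,
    ← Submodule.map_span]
  exact LinearEquiv.finrank_map_eq _ _

end ColumnRank

section IntegerMatrices

theorem linearIndependent_int_of_intCast {R : Type*} [Ring R] [Nontrivial R] {ι ι' : Type*}
    {v : ι → ι' → ℤ} (h : LinearIndependent R fun i => (Int.cast : ℤ → R) ∘ v i) :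
    LinearIndependent ℤ v := by
  -- a nontrivial integer relation divided by its gcd stays nontrivial modulo `ringChar R`
  rw [linearIndependent_iff'] at h ⊢
  intro s g hg i hi
  by_contra hgi
  obtain ⟨g', hgg', hg'⟩ := Finset.extract_gcd g ⟨i, hi⟩
  have hd : s.gcd g ≠ 0 := fun hd => hgi (Finset.gcd_eq_zero_iff.1 hd i hi)
  have hg'v : ∑ j ∈ s, g' j • v j = 0 := by
    refine smul_right_injective _ hd ?_
    simp only [smul_zero, Finset.smul_sum, smul_smul]
    rw [← hg]
    exact Finset.sum_congr rfl fun j hj => by rw [hgg' j hj]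
  have hchar : ∀ j ∈ s, (ringChar R : ℤ) ∣ g' j := fun j hj =>
    (CharP.intCast_eq_zero_iff R _ _).1 <| h s (fun j => (g' j : R)) (by
      ext u
      simpa using congr(((Int.cast ($hg'v u)) : R))) j hj
  have := Finset.dvd_gcd hchar
  rw [hg'] at this
  exact CharP.ringChar_ne_one (by exact_mod_cast Int.eq_one_of_dvd_one (by positivity) this)

theorem LinearIndepOn.col_intCast_of_intCast {K R : Type*} [Field K] [CharZero K] [Ring R]
    [Nontrivial R] {m n : Type*} [Finite m] {P : Matrix m n ℤ} {B : Set n}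
    (h : LinearIndepOn R (P.map (Int.cast : ℤ → R)).col B) :
    LinearIndepOn K (P.map (Int.cast : ℤ → K)).col B := by
  change LinearIndependent R fun p : B => (Int.cast : ℤ → R) ∘ P.col p at h
  have hZ := linearIndependent_int_of_intCast (v := fun p : B => P.col p) h
  have hK := (linearIndependent_algebraMap_comp_iff (S := K)).2 hZ
  rw [algebraMap_int_eq, Int.coe_castRingHom] at hK
  exact hK

theorem linearIndependent_col_intCast_of_det_mem {K F : Type*} [Field K] [CharZero K] [Field F]
    {m : Type*} [Fintype m] [DecidableEq m] {M : Matrix m m ℤ}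
    (hdet : M.det ∈ ({-1, 0, 1} : Set ℤ))
    (hK : LinearIndependent K (M.map (Int.cast : ℤ → K)).col) :
    LinearIndependent F (M.map (Int.cast : ℤ → F)).col := by
  rw [linearIndependent_cols_iff_isUnit, isUnit_iff_isUnit_det, ← Int.cast_det] at hK ⊢
  rcases hdet with h | h | h <;> simp_all

end IntegerMatrices

namespace Subtransversal3

variable {V : Type*} {S T : Set (V × Fin 3)}

theorem mono (hS : Subtransversal3 S) (hT : T ⊆ S) : Subtransversal3 T :=
  fun v i j hi hj => hS v i j (hT hi) (hT hj)

theorem insert_of_forall_notMem (hS : Subtransversal3 S) {v : V} (hv : ∀ i, (v, i) ∉ S)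
    (i : Fin 3) : Subtransversal3 (insert (v, i) S) := by
  rintro w j k (hj | hj) (hk | hk)
  · rw [(Prod.mk.inj hj).2, (Prod.mk.inj hk).2]
  · exact absurd ((Prod.mk.inj hj).1 ▸ hk) (hv k)
  · exact absurd ((Prod.mk.inj hk).1 ▸ hj) (hv j)
  · exact hS w j k hj hk

theorem range (t : V → Fin 3) : Subtransversal3 (Set.range fun v => (v, t v)) := by
  rintro v i j ⟨u, hu⟩ ⟨w, hw⟩
  simp only [Prod.ext_iff] at hu hw
  rw [← hu.2, ← hw.2, hu.1, hw.1]

end Subtransversal3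

section Isotropy

variable {R : Type*} [CommRing R] {V : Type*} [Fintype V]

def symplecticForm : LinearMap.BilinForm R ((V → R) × (V → R)) :=
  LinearMap.mk₂ R (fun x y => x.1 ⬝ᵥ y.2 - y.1 ⬝ᵥ x.2)
    (fun _ _ _ => by simp only [Prod.fst_add, Prod.snd_add, add_dotProduct, dotProduct_add]; abel)
    (fun _ _ _ => by simp [mul_sub])
    (fun _ _ _ => by simp only [Prod.fst_add, Prod.snd_add, add_dotProduct, dotProduct_add]; abel)
    (fun _ _ _ => by simp [mul_sub])

theorem symplecticForm_apply (x y : (V → R) × (V → R)) :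
    symplecticForm x y = x.1 ⬝ᵥ y.2 - y.1 ⬝ᵥ x.2 := by
  rw [symplecticForm, LinearMap.mk₂_apply]

theorem symplecticForm_eq_zero_of_add_mulVec_eq_zero {A : Matrix V V R} (hA : A.IsSymm)
    {x y : (V → R) × (V → R)} (hx : x.1 + A *ᵥ x.2 = 0) (hy : y.1 + A *ᵥ y.2 = 0) :
    symplecticForm x y = 0 := by
  rw [symplecticForm_apply, eq_neg_of_add_eq_zero_left hx, eq_neg_of_add_eq_zero_left hy,
    neg_dotProduct, neg_dotProduct, dotProduct_comm (A *ᵥ y.2), dotProduct_mulVec,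
    ← mulVec_transpose, hA.eq, sub_self]

variable [DecidableEq V]

/-- `IAS(G)` factors through `(a, b) ↦ a + A b`: the columns `φ_G(v)`, `χ_G(v)`, `ψ_G(v)` are the
images of `(e_v, 0)`, `(0, e_v)`, `(e_v, e_v)`. -/
def iasPair (R : Type*) [CommRing R] (p : V × Fin 3) : (V → R) × (V → R) :=
  (Pi.single p.1 (![1, 0, 1] p.2), Pi.single p.1 (![0, 1, 1] p.2))

theorem symplecticForm_eq_zero_of_mem_span {B : Set (V × Fin 3)} (hB : Subtransversal3 B)
    {x y : (V → R) × (V → R)} (hx : x ∈ Submodule.span R (iasPair R '' B))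
    (hy : y ∈ Submodule.span R (iasPair R '' B)) : symplecticForm x y = 0 := by
  induction hx using Submodule.span_induction with
  | mem x hx =>
    induction hy using Submodule.span_induction with
    | mem y hy =>
      obtain ⟨⟨v, i⟩, hp, rfl⟩ := hx
      obtain ⟨⟨w, j⟩, hq, rfl⟩ := hy
      by_cases hvw : v = w
      · subst hvw
        obtain rfl := hB v i j hp hq
        simp [symplecticForm_apply, iasPair, mul_comm]
      · simp [symplecticForm_apply, iasPair, hvw, Ne.symm hvw]
    | zero => simp
    | add _ _ _ _ h₁ h₂ => simp [h₁, h₂]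
    | smul _ _ _ h => simp [h]
  | zero => simp
  | add _ _ _ _ h₁ h₂ => simp [h₁, h₂]
  | smul _ _ _ h => simp [h]

end Isotropy

section IsotropicMatroid

variable {V : Type*} [Fintype V] [DecidableEq V] {A : Matrix V V (ZMod 2)}

theorem IASmat_col_eq (A : Matrix V V (ZMod 2)) (p : V × Fin 3) :
    (IASmat A).col p = LinearMap.id.coprod A.mulVecLin (iasPair (ZMod 2) p) := by
  obtain ⟨w, i⟩ := p
  ext u
  fin_cases i <;> simp [IASmat, iasPair, Pi.single_apply, eq_comm]

theorem exists_col_notMem_span (hA : A.IsSymm) {B : Set (V × Fin 3)} (hB : Subtransversal3 B)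
    {v : V} (hv : ∀ i, (v, i) ∉ B) :
    ∃ i, (IASmat A).col (v, i) ∉ Submodule.span (ZMod 2) ((IASmat A).col '' B) := by
  -- Lifting the relations expressing `φ_G(v)` and `χ_G(v)` to the kernel of `(a, b) ↦ a + A b`
  -- and pairing them gives `symplecticForm (e_v, 0) (0, e_v) = 1`, against the isotropy of that
  -- kernel.
  by_contra! h
  have hcol : (IASmat A).col = LinearMap.id.coprod A.mulVecLin ∘ iasPair (ZMod 2) :=
    funext (IASmat_col_eq A)
  have hker : ∀ i, ∃ x ∈ Submodule.span (ZMod 2) (iasPair (ZMod 2) '' B),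
      (iasPair (ZMod 2) (v, i) - x).1 + A *ᵥ (iasPair (ZMod 2) (v, i) - x).2 = 0 := by
    intro i
    have hi := h i
    rw [hcol, Set.image_comp, Submodule.span_image, Submodule.mem_map] at hi
    obtain ⟨x, hx, hxv⟩ := hi
    refine ⟨x, hx, ?_⟩
    have hsub : LinearMap.id.coprod A.mulVecLin (iasPair (ZMod 2) (v, i) - x) = 0 := by
      rw [map_sub, hxv, Function.comp_apply, sub_self]
    simpa using hsub
  obtain ⟨x, hx, hx0⟩ := hker 0
  obtain ⟨y, hy, hy1⟩ := hker 1
  have hins : ∀ i, ∀ z ∈ Submodule.span (ZMod 2) (iasPair (ZMod 2) '' B),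
      z ∈ Submodule.span (ZMod 2) (iasPair (ZMod 2) '' insert (v, i) B) := fun i z hz =>
    Submodule.span_mono (Set.image_mono (Set.subset_insert _ _)) hz
  have hnew : ∀ i, iasPair (ZMod 2) (v, i) ∈
      Submodule.span (ZMod 2) (iasPair (ZMod 2) '' insert (v, i) B) :=
    fun i => Submodule.subset_span (Set.mem_image_of_mem _ (Set.mem_insert _ _))
  have key := symplecticForm_eq_zero_of_add_mulVec_eq_zero hA hx0 hy1
  simp only [map_sub, LinearMap.sub_apply] at key
  rw [symplecticForm_eq_zero_of_mem_span hB hx hy,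
    symplecticForm_eq_zero_of_mem_span (hB.insert_of_forall_notMem hv 0) (hnew 0) (hins 0 y hy),
    symplecticForm_eq_zero_of_mem_span (hB.insert_of_forall_notMem hv 1) (hins 1 x hx)
      (hnew 1)] at key
  simp [symplecticForm_apply, iasPair] at key

theorem exists_transversal_linearIndependent (hA : A.IsSymm) {B : Set (V × Fin 3)}
    (hB : Subtransversal3 B) (hBi : LinearIndepOn (ZMod 2) (IASmat A).col B) :
    ∃ t : V → Fin 3, B ⊆ Set.range (fun v => (v, t v)) ∧
      LinearIndependent (ZMod 2) ((IASmat A).col ∘ fun v => (v, t v)) := by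
  obtain ⟨T, hBT, hT⟩ := Finite.exists_le_maximal
    (p := fun T => Subtransversal3 T ∧ LinearIndepOn (ZMod 2) (IASmat A).col T) ⟨hB, hBi⟩
  have hcover : ∀ v, ∃ i, (v, i) ∈ T := by
    by_contra! ⟨v, hv⟩
    obtain ⟨i, hi⟩ := exists_col_notMem_span hA hT.prop.1 hv
    have hins := hT.2 ⟨hT.prop.1.insert_of_forall_notMem hv i,
      (linearIndepOn_insert (hv i)).2 ⟨hT.prop.2, hi⟩⟩ (Set.subset_insert _ _)
    exact hv i (hins (Set.mem_insert _ _))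
  choose t ht using hcover
  refine ⟨t, fun p hp => ⟨p.1, Prod.ext rfl (hT.prop.1 _ _ _ (ht p.1) (hBT hp))⟩, ?_⟩
  exact (linearIndepOn_range_iff (fun _ _ h => congrArg Prod.fst h) _).1
    (hT.prop.2.mono (Set.range_subset_iff.2 ht))

end IsotropicMatroid

theorem LinearIndepOn.col_intCast_of_real {V : Type} [Fintype V] [DecidableEq V]
    {A : Matrix V V (ZMod 2)} (hA : A.IsSymm) {P : Matrix V (V × Fin 3) ℤ}
    (hunim : ∀ t : V → Fin 3,
      (Matrix.of fun v u => P v (u, t u)).det ∈ ({-1, 0, 1} : Set ℤ))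
    (hR : ∀ S : Set (V × Fin 3), Subtransversal3 S →
      colSpanRank ℝ (P.map (Int.cast : ℤ → ℝ)) S = colSpanRank (ZMod 2) (IASmat A) S)
    (F : Type*) [Field F] {B : Set (V × Fin 3)} (hB : Subtransversal3 B)
    (hBR : LinearIndepOn ℝ (P.map (Int.cast : ℤ → ℝ)).col B) :
    LinearIndepOn F (P.map (Int.cast : ℤ → F)).col B := by
  have hB2 : LinearIndepOn (ZMod 2) (IASmat A).col B := by
    rw [linearIndepOn_col_iff_colSpanRank_eq_ncard _ B.toFinite, ← hR B hB,
      ← linearIndepOn_col_iff_colSpanRank_eq_ncard _ B.toFinite]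
    exact hBR
  obtain ⟨t, hBt, ht⟩ := exists_transversal_linearIndependent hA hB hB2
  have htR : LinearIndependent ℝ ((P.map (Int.cast : ℤ → ℝ)).col ∘ fun v => (v, t v)) := by
    rw [linearIndependent_col_comp_iff, hR _ (Subtransversal3.range t),
      ← linearIndependent_col_comp_iff]
    exact ht
  have htF : LinearIndependent F ((P.map (Int.cast : ℤ → F)).col ∘ fun v => (v, t v)) :=
    linearIndependent_col_intCast_of_det_mem (hunim t) htR
  exact ((linearIndepOn_range_iff (fun _ _ h => congrArg Prod.fst h) _).2 htF).mono hBt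

/-- If an integer matrix `P` with rows `V` and columns `W(G)` is transversely
unimodular and represents `Z₃(G)` over `ℝ`, then its entrywise image in any field `F`
represents `Z₃(G)` over `F`; in particular `Z₃(G)` is representable over every field. -/
theorem Z3_regular_of_transversely_unimodular
    {V : Type} [Fintype V] [DecidableEq V] (A : Matrix V V (ZMod 2)) (hsym : A.IsSymm)
    (P : Matrix V (V × Fin 3) ℤ)
    (hunim : ∀ t : V → Fin 3,
      (Matrix.of fun v u => P v (u, t u)).det ∈ ({-1, 0, 1} : Set ℤ))
    (hR : ∀ S : Set (V × Fin 3), Subtransversal3 S →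
      colSpanRank ℝ (P.map (Int.cast : ℤ → ℝ)) S = colSpanRank (ZMod 2) (IASmat A) S) :
    ∀ (F : Type) [Field F],
      (∀ S : Set (V × Fin 3), Subtransversal3 S →
        colSpanRank F (P.map (Int.cast : ℤ → F)) S
          = colSpanRank (ZMod 2) (IASmat A) S) ∧
      Z3Rep F A := by
  intro F _
  have hF : ∀ S : Set (V × Fin 3), Subtransversal3 S →
      colSpanRank F (P.map (Int.cast : ℤ → F)) S = colSpanRank (ZMod 2) (IASmat A) S := by
    intro S hS
    rw [← hR S hS]
    exact le_antisymm
      (colSpanRank_le_of_linearIndepOn _ _ S fun B _ hB => hB.col_intCast_of_intCast)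
      (colSpanRank_le_of_linearIndepOn _ _ S fun B hBS hB =>
        hB.col_intCast_of_real hsym hunim hR F (hS.mono hBS))
  refine ⟨hF, Fintype.card V, (P.map Int.cast).submatrix (Fintype.equivFin V).symm id,
    fun S hS => ?_⟩
  rw [colSpanRank_submatrix_equiv, hF S hS]
end
end
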